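/- arXiv:1910.06182 — 6 statements merged into one kernel-verified Lean document; each statement's English description precedes it below -/
import Mathlib

section
/- Let ι = (i_1,…,i_N) be a reduced word for the longest element of the Weyl group of A. Then for every index i, every x ∈ ℤ^N and every H ∈ ℋ_ι, the Kashiwara operators of the cellular crystal B_ι satisfy ẽ_i(x + H) = ẽ_i(x) + H and f̃_i(x + H) = f̃_i(x) + H. -/
/-!
STATEMENT 2: Let ι = (i_1,…,i_N) be a reduced word for the longest element of the
Weyl group of A. Then for every index i, every x ∈ ℤ^N and every H ∈ ℋ_ι, the
Kashiwara operators of the cellular crystal B_ι satisfy ẽ_i(x+H) = ẽ_i(x)+H and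
f̃_i(x+H) = f̃_i(x)+H.
-/
/-- The simple reflection `s_i` of the Cartan matrix `a`, acting on the root
lattice (tensored with `ℚ`), `s_i(α_j) = α_j - a_{ij} α_i`. -/
def sRefl {n : ℕ} (a : Fin n → Fin n → ℤ) (i : Fin n) : (Fin n → ℚ) → (Fin n → ℚ) :=
  fun v => v - (∑ j, (a i j : ℚ) * v j) • (Pi.single i 1 : Fin n → ℚ)

/-- The product `s_{i_1} s_{i_2} ⋯ s_{i_k}` of simple reflections along a word. -/
def wProd {n : ℕ} (a : Fin n → Fin n → ℤ) (l : List (Fin n)) : (Fin n → ℚ) → (Fin n → ℚ) :=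
  (l.map (sRefl a)).foldr (· ∘ ·) id

/-- An `n×n` Cartan matrix of a finite-dimensional complex simple Lie algebra:
an indecomposable generalized Cartan matrix whose Weyl group is finite. -/
structure SimpleCartanMatrix (n : ℕ) where
  a : Fin n → Fin n → ℤ
  npos : 0 < n
  diag : ∀ i, a i i = 2
  offdiag_nonpos : ∀ i j, i ≠ j → a i j ≤ 0
  zero_symm : ∀ i j, a i j = 0 → a j i = 0
  indecomposable : ∀ S : Set (Fin n), (∀ i ∈ S, ∀ j, j ∉ S → a i j = 0) → S = ∅ ∨ S = Set.univ
  finiteWeyl : Set.Finite {w : (Fin n → ℚ) → (Fin n → ℚ) | ∃ l : List (Fin n), w = wProd a l}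

/-- A word is reduced if it has minimal length among all words representing the
same Weyl group element. -/
def IsReducedList {n : ℕ} (a : Fin n → Fin n → ℤ) (l : List (Fin n)) : Prop :=
  ∀ l' : List (Fin n), wProd a l' = wProd a l → l.length ≤ l'.length

/-- The function `a_m(x) = -x_m - ∑_{ν<m} a_{i,i_ν} x_ν` (for `m` with `i_m = i`). -/
def cellA {n k : ℕ} (a : Fin n → Fin n → ℤ) (ι : Fin k → Fin n) (i : Fin n)
    (x : Fin k → ℤ) (m : Fin k) : ℤ :=
  - x m - ∑ ν ∈ Finset.univ.filter (fun ν => ν < m), a i (ι ν) * x ν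

/-- The set of indices `m` with `i_m = i` at which `a_m(x)` attains its minimum. -/
def argminSet {n k : ℕ} (a : Fin n → Fin n → ℤ) (ι : Fin k → Fin n) (i : Fin n)
    (x : Fin k → ℤ) : Finset (Fin k) :=
  (Finset.univ.filter (fun m => ι m = i)).filter
    (fun m => ∀ m' ∈ Finset.univ.filter (fun m' => ι m' = i), cellA a ι i x m ≤ cellA a ι i x m')

/-- The Kashiwara operator `ẽ_i` of the cellular crystal `B_ι` on `ℤ^k`:
increase the `k_e(x)`-th coordinate by 1, where `k_e(x)` is the smallest index
`m` with `i_m = i` at which `a_m(x)` attains its minimum. -/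
def kashE {n k : ℕ} (a : Fin n → Fin n → ℤ) (ι : Fin k → Fin n) (i : Fin n)
    (x : Fin k → ℤ) : Fin k → ℤ :=
  if h : (argminSet a ι i x).Nonempty then
    Function.update x ((argminSet a ι i x).min' h) (x ((argminSet a ι i x).min' h) + 1)
  else x

/-- The Kashiwara operator `f̃_i` of the cellular crystal `B_ι` on `ℤ^k`:
decrease the `k_f(x)`-th coordinate by 1, where `k_f(x)` is the largest index
`m` with `i_m = i` at which `a_m(x)` attains its minimum. -/
def kashF {n k : ℕ} (a : Fin n → Fin n → ℤ) (ι : Fin k → Fin n) (i : Fin n)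
    (x : Fin k → ℤ) : Fin k → ℤ :=
  if h : (argminSet a ι i x).Nonempty then
    Function.update x ((argminSet a ι i x).max' h) (x ((argminSet a ι i x).max' h) - 1)
  else x

/-- The edge relation of the crystal graph of `B_ι`: an edge between `x` and
`f̃_i(x)` for every `x` and every `i` occurring in `ι`. -/
def cellEdge {n k : ℕ} (a : Fin n → Fin n → ℤ) (ι : Fin k → Fin n)
    (x y : Fin k → ℤ) : Prop :=
  ∃ i : Fin n, (∃ m, ι m = i) ∧ (kashF a ι i x = y ∨ kashF a ι i y = x)

/-- A word is a reduced word for the longest element of the Weyl group iff it is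
reduced and of maximal length among all reduced words. -/
def IsLongestWord {n : ℕ} (a : Fin n → Fin n → ℤ) (l : List (Fin n)) : Prop :=
  IsReducedList a l ∧ ∀ l' : List (Fin n), IsReducedList a l' → l'.length ≤ l.length

/-- The linear form `β_k(x) = x_k + ∑_{k<j<k⁺} a_{i_k,i_j} x_j + x_{k⁺}`, where
`k⁺` is the first index after `k` carrying the same letter as `i_k`
(junk value `0` if `k⁺` does not exist). -/
def betaFn {n N : ℕ} (a : Fin n → Fin n → ℤ) (ι : Fin N → Fin n) (k : Fin N)
    (x : Fin N → ℤ) : ℤ :=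
  if h : (Finset.univ.filter (fun l => k < l ∧ ι l = ι k)).Nonempty then
    x k + (∑ j ∈ Finset.univ.filter
        (fun j => k < j ∧ j < (Finset.univ.filter (fun l => k < l ∧ ι l = ι k)).min' h),
        a (ι k) (ι j) * x j)
      + x ((Finset.univ.filter (fun l => k < l ∧ ι l = ι k)).min' h)
  else 0

/-- The set `ℋ_ι = {x ∈ ℤ^N : β_k(x) = 0 for every k such that k⁺ ≤ N}`. -/
def Hset {n N : ℕ} (a : Fin n → Fin n → ℤ) (ι : Fin N → Fin n) : Set (Fin N → ℤ) :=
  {x | ∀ k : Fin N, (∃ l, k < l ∧ ι l = ι k) → betaFn a ι k x = 0}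

lemma cellA_add {n N : ℕ} (a : Fin n → Fin n → ℤ) (ι : Fin N → Fin n) (i : Fin n)
    (x H : Fin N → ℤ) (m : Fin N) :
    cellA a ι i (x + H) m = cellA a ι i x m + cellA a ι i H m := by
  simp only [cellA, Pi.add_apply, mul_add, Finset.sum_add_distrib]
  ring

lemma cellA_step {n N : ℕ} (a : Fin n → Fin n → ℤ) (ι : Fin N → Fin n)
    (hdiag : ∀ i, a i i = 2) (H : Fin N → ℤ) (hH : H ∈ Hset a ι) (m : Fin N)
    (h : (Finset.univ.filter (fun l => m < l ∧ ι l = ι m)).Nonempty) :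
    cellA a ι (ι m) H ((Finset.univ.filter (fun l => m < l ∧ ι l = ι m)).min' h)
      = cellA a ι (ι m) H m := by
  set m' := (Finset.univ.filter (fun l => m < l ∧ ι l = ι m)).min' h with hm'
  have hmem := Finset.min'_mem _ h
  rw [Finset.mem_filter] at hmem
  obtain ⟨-, hlt, hι⟩ := hmem
  have hβ : betaFn a ι m H = 0 := hH m ⟨m', hlt, hι⟩
  rw [betaFn, dif_pos h] at hβ
  have hsplit : (Finset.univ.filter (fun ν => ν < m'))
      = (Finset.univ.filter (fun ν => ν < m)) ∪
        ({m} ∪ Finset.univ.filter (fun ν => m < ν ∧ ν < m')) := by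
    ext ν
    simp only [Finset.mem_filter, Finset.mem_univ, true_and, Finset.mem_union,
      Finset.mem_singleton, Fin.lt_def, Fin.ext_iff]
    have := (Fin.lt_def).mp hlt
    omega
  have hd1 : Disjoint (Finset.univ.filter (fun ν => ν < m))
      ({m} ∪ Finset.univ.filter (fun ν => m < ν ∧ ν < m')) := by
    rw [Finset.disjoint_left]
    intro ν hν hν'
    simp only [Finset.mem_filter, Finset.mem_univ, true_and] at hν
    simp only [Finset.mem_union, Finset.mem_singleton, Finset.mem_filter,
      Finset.mem_univ, true_and] at hν'
    rcases hν' with rfl | ⟨h1, -⟩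
    · exact lt_irrefl _ hν
    · exact lt_irrefl _ (hν.trans h1)
  have hd2 : Disjoint ({m} : Finset (Fin N))
      (Finset.univ.filter (fun ν => m < ν ∧ ν < m')) := by
    rw [Finset.disjoint_left]
    intro ν hν hν'
    simp only [Finset.mem_singleton] at hν
    simp only [Finset.mem_filter, Finset.mem_univ, true_and] at hν'
    exact lt_irrefl _ (hν ▸ hν'.1)
  simp only [cellA]
  rw [hsplit, Finset.sum_union hd1, Finset.sum_union hd2, Finset.sum_singleton,
    hdiag (ι m)]
  linarith [hβ]

lemma cellA_const {n N : ℕ} (a : Fin n → Fin n → ℤ) (ι : Fin N → Fin n)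
    (hdiag : ∀ i, a i i = 2) (H : Fin N → ℤ) (hH : H ∈ Hset a ι) (i : Fin n) :
    ∀ m m' : Fin N, ι m = i → ι m' = i → cellA a ι i H m = cellA a ι i H m' := by
  have key : ∀ d : ℕ, ∀ m m' : Fin N, ι m = i → ι m' = i → m ≤ m' →
      (m' : ℕ) - (m : ℕ) = d → cellA a ι i H m = cellA a ι i H m' := by
    intro d
    induction d using Nat.strong_induction_on with
    | _ d ih =>
      intro m m' hm hm' hle hd
      rcases eq_or_lt_of_le hle with heq | hlt
      · rw [heq]
      · have hne : (Finset.univ.filter (fun l => m < l ∧ ι l = ι m)).Nonempty :=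
          ⟨m', by simp [hlt, hm, hm']⟩
        set p := (Finset.univ.filter (fun l => m < l ∧ ι l = ι m)).min' hne with hp
        have hstep := cellA_step a ι hdiag H hH m hne
        have hmemp := Finset.min'_mem _ hne
        rw [Finset.mem_filter] at hmemp
        obtain ⟨-, hmp, hιp⟩ := hmemp
        have hpm' : p ≤ m' := Finset.min'_le _ _ (by simp [hlt, hm, hm'])
        have hstep2 : cellA a ι i H p = cellA a ι i H m := by
          rw [← hm]; exact hstep
        have hιpi : ι p = i := hιp.trans hm
        have hlt' : (m' : ℕ) - (p : ℕ) < d := by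
          have h1 := (Fin.lt_def).mp hmp
          have h2 := (Fin.le_def).mp hpm'
          have h3 := (Fin.lt_def).mp hlt
          omega
        calc cellA a ι i H m = cellA a ι i H p := hstep2.symm
          _ = cellA a ι i H m' := ih _ hlt' p m' hιpi hm' hpm' rfl
  intro m m' hm hm'
  rcases le_total m m' with hle | hle
  · exact key _ m m' hm hm' hle rfl
  · exact (key _ m' m hm' hm hle rfl).symm

lemma argminSet_add {n N : ℕ} (a : Fin n → Fin n → ℤ) (ι : Fin N → Fin n)
    (hdiag : ∀ i, a i i = 2) (i : Fin n) (x H : Fin N → ℤ) (hH : H ∈ Hset a ι) :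
    argminSet a ι i (x + H) = argminSet a ι i x := by
  unfold argminSet
  ext m
  simp only [Finset.mem_filter, Finset.mem_univ, true_and]
  constructor
  · rintro ⟨hm, hmin⟩
    refine ⟨hm, fun m' hm' => ?_⟩
    have hm'' : ι m' = i := by simpa using hm'
    have h1 := hmin m' (by simp [hm''])
    have hc := cellA_const a ι hdiag H hH i m m' hm hm''
    rw [cellA_add, cellA_add] at h1
    linarith
  · rintro ⟨hm, hmin⟩
    refine ⟨hm, fun m' hm' => ?_⟩
    have hm'' : ι m' = i := by simpa using hm'
    have h1 := hmin m' (by simp [hm''])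
    have hc := cellA_const a ι hdiag H hH i m m' hm hm''
    rw [cellA_add, cellA_add]
    linarith

lemma update_add_aux {N : ℕ} (x H : Fin N → ℤ) (p : Fin N) (c : ℤ) :
    Function.update (x + H) p ((x + H) p + c) = Function.update x p (x p + c) + H := by
  funext q
  by_cases hq : q = p
  · subst hq; simp [Function.update_self]; ring
  · simp [Function.update_of_ne hq]

/-- For a reduced word `ι` of the longest Weyl group element,
the Kashiwara operators of the cellular crystal `B_ι` commute with translation
by any element of `ℋ_ι`. -/
theorem kashiwara_ops_translate {n N : ℕ} (C : SimpleCartanMatrix n)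
    (ι : Fin N → Fin n) (hlong : IsLongestWord C.a (List.ofFn ι))
    (i : Fin n) (x H : Fin N → ℤ) (hH : H ∈ Hset C.a ι) :
    kashE C.a ι i (x + H) = kashE C.a ι i x + H ∧
    kashF C.a ι i (x + H) = kashF C.a ι i x + H := by
  have harg := argminSet_add C.a ι C.diag i x H hH
  constructor
  · unfold kashE
    rw [harg]
    by_cases h : (argminSet C.a ι i x).Nonempty
    · rw [dif_pos h, dif_pos h]
      exact update_add_aux x H _ 1
    · rw [dif_neg h, dif_neg h]
  · unfold kashF
    rw [harg]
    by_cases h : (argminSet C.a ι i x).Nonempty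
    · rw [dif_pos h, dif_pos h]
      have := update_add_aux x H ((argminSet C.a ι i x).max' h) (-1)
      simpa [sub_eq_add_neg] using this
    · rw [dif_neg h, dif_neg h]
end

section
/- Let Φ be a crystallographic root system with simple roots α_1,…,α_n, simple reflections s_1,…,s_n and Cartan integers c_{ij} determined by s_i(α_j) = α_j − c_{ij} α_i. Let (i_k, i_{k+1}, …, i_N) be a finite sequence of indices such that i_{k^{(+)}} = i_k for some k < k^{(+)} ≤ N and i_j ≠ i_k for all k < j < k^{(+)}. Setting α^{(j)} = s_{i_N} s_{i_{N−1}} ⋯ s_{i_{j+1}}(α_{i_j}) for k ≤ j ≤ N, one has the identity α^{(k)} = −α^{(k^{(+)})} − ∑_{k<j<k^{(+)}} c_{i_j, i_k} α^{(j)}. -/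
/-!
STATEMENT 4: Let Φ be a crystallographic root system with simple roots α_1,…,α_n,
simple reflections s_1,…,s_n and Cartan integers c_{ij} with s_i(α_j) = α_j − c_{ij}α_i.
Let (i_k,…,i_N) be a sequence of indices such that i_{k⁺} = i_k for some k < k⁺ ≤ N
and i_j ≠ i_k for all k < j < k⁺. Setting α^{(j)} = s_{i_N}⋯s_{i_{j+1}}(α_{i_j}),
one has α^{(k)} = −α^{(k⁺)} − ∑_{k<j<k⁺} c_{i_j,i_k} α^{(j)}.
-/

/-- The simple reflection `s_i(v) = v - ⟨v, α_i^∨⟩ α_i`. -/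
def rsRefl {V : Type*} [AddCommGroup V] [Module ℚ V] {n : ℕ}
    (α : Fin n → V) (coroot : Fin n → V →ₗ[ℚ] ℚ) (i : Fin n) (v : V) : V :=
  v - coroot i v • α i

/-- `chainAux f m j v` applies `f (j+1)`, then `f (j+2)`, …, then `f (j+m)` to `v`. -/
def chainAux {V : Type*} (f : ℕ → V → V) : ℕ → ℕ → V → V
  | 0, _, v => v
  | m + 1, j, v => chainAux f m (j + 1) (f (j + 1) v)

/-- The vector `α^{(j)} = s_{i_N} s_{i_{N-1}} ⋯ s_{i_{j+1}} (α_{i_j})`. -/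
def alphaSeq {V : Type*} [AddCommGroup V] [Module ℚ V] {n : ℕ}
    (α : Fin n → V) (coroot : Fin n → V →ₗ[ℚ] ℚ) (ι : ℕ → Fin n) (N j : ℕ) : V :=
  chainAux (fun t => rsRefl α coroot (ι t)) (N - j) j (α (ι j))


section AuxLemmas

variable {V : Type*} [AddCommGroup V] [Module ℚ V] {n : ℕ}

lemma rsRefl_sub_smul (α : Fin n → V) (coroot : Fin n → V →ₗ[ℚ] ℚ) (i : Fin n)
    (u v : V) (c : ℚ) :
    rsRefl α coroot i (u - c • v) = rsRefl α coroot i u - c • rsRefl α coroot i v := by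
  simp only [rsRefl, map_sub, map_smul, smul_eq_mul, sub_smul, mul_smul]
  module

lemma rsRefl_neg (α : Fin n → V) (coroot : Fin n → V →ₗ[ℚ] ℚ) (i : Fin n) (v : V) :
    rsRefl α coroot i (-v) = - rsRefl α coroot i v := by
  simp only [rsRefl, map_neg, neg_smul]
  module

lemma chainAux_sub_smul (f : ℕ → V → V)
    (hf : ∀ t (u v : V) (c : ℚ), f t (u - c • v) = f t u - c • f t v) :
    ∀ (m j : ℕ) (u v : V) (c : ℚ),
      chainAux f m j (u - c • v) = chainAux f m j u - c • chainAux f m j v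
  | 0, _, _, _, _ => rfl
  | m + 1, j, u, v, c => by
    simp only [chainAux, hf]
    exact chainAux_sub_smul f hf m (j + 1) _ _ c

lemma chainAux_neg (f : ℕ → V → V)
    (hf : ∀ t (v : V), f t (-v) = - f t v) :
    ∀ (m j : ℕ) (v : V), chainAux f m j (-v) = - chainAux f m j v
  | 0, _, _ => rfl
  | m + 1, j, v => by
    simp only [chainAux, hf]
    exact chainAux_neg f hf m (j + 1) _

lemma chainAux_step (f : ℕ → V → V) (N j : ℕ) (h : j < N) (v : V) :
    chainAux f (N - j) j v = chainAux f (N - (j + 1)) (j + 1) (f (j + 1) v) := by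
  obtain ⟨m, hm⟩ : ∃ m, N - j = m + 1 := ⟨N - j - 1, by omega⟩
  have h2 : N - (j + 1) = m := by omega
  rw [hm, h2]
  rfl

lemma alphaSeq_aux (α : Fin n → V) (coroot : Fin n → V →ₗ[ℚ] ℚ)
    (hpair : ∀ i, coroot i (α i) = 2)
    (ι : ℕ → Fin n) (N k kp : ℕ) (hkN : kp ≤ N) (hsame : ι kp = ι k) :
    ∀ (d j : ℕ), j + 1 + d = kp → k ≤ j →
      chainAux (fun t => rsRefl α coroot (ι t)) (N - j) j (α (ι k)) =
        - alphaSeq α coroot ι N kp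
          - ∑ j' ∈ Finset.Ioo j kp, coroot (ι j') (α (ι k)) • alphaSeq α coroot ι N j' := by
  intro d
  induction d with
  | zero =>
    intro j hj _
    have hjN : j < N := by omega
    rw [chainAux_step _ N j hjN]
    have hkpj : j + 1 = kp := by omega
    have hval : rsRefl α coroot (ι (j + 1)) (α (ι k)) = - α (ι (j + 1)) := by
      rw [hkpj, hsame, rsRefl, hpair]
      module
    rw [hval, chainAux_neg _ (fun t v => rsRefl_neg α coroot (ι t) v),
      show Finset.Ioo j kp = ∅ by ext x; simp only [Finset.mem_Ioo, Finset.notMem_empty, iff_false]; omega]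
    simp only [Finset.sum_empty, sub_zero]
    congr 1
    rw [alphaSeq, ← hkpj]
  | succ d ih =>
    intro j hj hkj
    have hjN : j < N := by omega
    rw [chainAux_step _ N j hjN]
    have hval : rsRefl α coroot (ι (j + 1)) (α (ι k)) =
        α (ι k) - coroot (ι (j + 1)) (α (ι k)) • α (ι (j + 1)) := rfl
    rw [hval, chainAux_sub_smul _ (fun t u v c => rsRefl_sub_smul α coroot (ι t) u v c),
      ih (j + 1) (by omega) (by omega)]
    have hsplit : Finset.Ioo j kp = insert (j + 1) (Finset.Ioo (j + 1) kp) := by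
      ext x
      simp only [Finset.mem_Ioo, Finset.mem_insert]
      omega
    rw [hsplit, Finset.sum_insert (by simp)]
    have : chainAux (fun t => rsRefl α coroot (ι t)) (N - (j + 1)) (j + 1) (α (ι (j + 1)))
        = alphaSeq α coroot ι N (j + 1) := rfl
    rw [this]
    abel

end AuxLemmas

/-- In a crystallographic root system, with
`α^{(j)} = s_{i_N} ⋯ s_{i_{j+1}}(α_{i_j})`, if `i_{k⁺} = i_k` and `i_j ≠ i_k` for
all `k < j < k⁺`, then `α^{(k)} = -α^{(k⁺)} - ∑_{k<j<k⁺} c_{i_j, i_k} α^{(j)}`. -/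
theorem alphaSeq_identity {V : Type*} [AddCommGroup V] [Module ℚ V] {n : ℕ}
    (Φ : Set V) (hfin : Φ.Finite)
    (α : Fin n → V) (coroot : Fin n → V →ₗ[ℚ] ℚ)
    (hmem : ∀ i, α i ∈ Φ)
    (hpair : ∀ i, coroot i (α i) = 2)
    (hreflmem : ∀ i, ∀ β ∈ Φ, rsRefl α coroot i β ∈ Φ)
    (hcrys : ∀ i, ∀ β ∈ Φ, ∃ z : ℤ, coroot i β = (z : ℚ))
    (ι : ℕ → Fin n) (N k kp : ℕ)
    (hk : k < kp) (hkN : kp ≤ N)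
    (hsame : ι kp = ι k)
    (hbetween : ∀ j, k < j → j < kp → ι j ≠ ι k) :
    alphaSeq α coroot ι N k =
      - alphaSeq α coroot ι N kp
        - ∑ j ∈ Finset.Ioo k kp, coroot (ι j) (α (ι k)) • alphaSeq α coroot ι N j := by
  have h0 : alphaSeq α coroot ι N k =
      chainAux (fun t => rsRefl α coroot (ι t)) (N - k) k (α (ι k)) := rfl
  rw [h0]
  exact alphaSeq_aux α coroot hpair ι N k kp hkN hsame (kp - 1 - k) k (by omega) le_rfl
end

section
/- Suppose B is a crystal containing an element b_0 of weight 0 satisfying: (i) wt(b) ∈ ∑_{i∈I} ℤ_{≤0}α_i for all b ∈ B; (ii) b_0 is the unique element of B of weight 0; (iii) ε_i(b_0) = 0 for all i ∈ I; (iv) ε_i(b) ∈ ℤ for all b ∈ B and i ∈ I; (v) for each i ∈ I there exists a strict embedding Ψ_i : B → B ⊗ B_i; (vi) Ψ_i(B) ⊆ B ⊗ {f̃_i^n(0)_i : n ≥ 0}; (vii′) for every b ∈ B with b ≠ b_0 there exists i ∈ I with ẽ_i b ≠ 0. Then any two crystals satisfying (i)–(vi) and (vii′) are isomorphic: if (B,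 b_0) and (B′, b′_0) both satisfy these conditions, there is a bijection B → B′ sending b_0 to b′_0, preserving wt, ε_i and φ_i, and commuting with all ẽ_i and f̃_i. -/
/-- The simple root `α_i`, as an element of the weight lattice `P = ⊕_j ℤΛ_j`
(in coordinates with respect to the fundamental weights: `α_i = ∑_j a_{ji} Λ_j`,
so that `⟨h_j, α_i⟩ = a_{ji}`). -/
def alphaWt {n : ℕ} (a : Fin n → Fin n → ℤ) (i : Fin n) : Fin n → ℤ :=
  fun j => a j i

/-- The raw data of a crystal: maps `wt`, `ε_i`, `φ_i` and the Kashiwara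
operators `ẽ_i, f̃_i` on `B ⊔ {0}` (`0` being `none`). -/
structure PreCrystal (n : ℕ) (B : Type*) where
  wt : B → Fin n → ℤ
  eps : Fin n → B → WithBot ℤ
  phi : Fin n → B → WithBot ℤ
  e : Fin n → Option B → Option B
  f : Fin n → Option B → Option B

/-- The crystal axioms for a `PreCrystal` with respect to a Cartan matrix. -/
structure IsCrystal {n : ℕ} (a : Fin n → Fin n → ℤ) {B : Type*}
    (P : PreCrystal n B) : Prop where
  e_none : ∀ i, P.e i none = none
  f_none : ∀ i, P.f i none = none
  phi_eq : ∀ i b, P.phi i b = P.eps i b + ((P.wt b i : ℤ) : WithBot ℤ)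
  wt_e : ∀ i b b', P.e i (some b) = some b' → P.wt b' = P.wt b + alphaWt a i
  eps_e : ∀ i b b', P.e i (some b) = some b' → P.eps i b' + 1 = P.eps i b
  phi_e : ∀ i b b', P.e i (some b) = some b' → P.phi i b' = P.phi i b + 1
  wt_f : ∀ i b b', P.f i (some b) = some b' → P.wt b' = P.wt b - alphaWt a i
  eps_f : ∀ i b b', P.f i (some b) = some b' → P.eps i b' = P.eps i b + 1
  phi_f : ∀ i b b', P.f i (some b) = some b' → P.phi i b' + 1 = P.phi i b
  f_iff_e : ∀ i (b b' : B), P.f i (some b) = some b' ↔ P.e i (some b') = some b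
  e_bot : ∀ i b, P.phi i b = ⊥ → P.e i (some b) = none
  f_bot : ∀ i b, P.phi i b = ⊥ → P.f i (some b) = none

/-- The tensor product of two crystals (on the underlying data). -/
noncomputable def PreCrystal.tensor {n : ℕ} {B1 B2 : Type*} (P1 : PreCrystal n B1)
    (P2 : PreCrystal n B2) : PreCrystal n (B1 × B2) where
  wt := fun b => P1.wt b.1 + P2.wt b.2
  eps := fun i b => max (P1.eps i b.1) (P2.eps i b.2 + ((-(P1.wt b.1 i) : ℤ) : WithBot ℤ))
  phi := fun i b => max (P2.phi i b.2) (P1.phi i b.1 + ((P2.wt b.2 i : ℤ) : WithBot ℤ))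
  e := fun i ob => ob.bind (fun b =>
    if P2.eps i b.2 ≤ P1.phi i b.1 then (P1.e i (some b.1)).map (fun b1 => (b1, b.2))
    else (P2.e i (some b.2)).map (fun b2 => (b.1, b2)))
  f := fun i ob => ob.bind (fun b =>
    if P2.eps i b.2 < P1.phi i b.1 then (P1.f i (some b.1)).map (fun b1 => (b1, b.2))
    else (P2.f i (some b.2)).map (fun b2 => (b.1, b2)))


/-- The elementary crystal `B_i` on the set `ℤ` (the element `x` representing
`(x)_i`): `wt((x)_i) = x α_i`, `ε_i((x)_i) = −x`, `φ_i((x)_i) = x`,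
`ε_j = φ_j = −∞` for `j ≠ i`, `ẽ_i (x)_i = (x+1)_i`, `f̃_i (x)_i = (x−1)_i`,
and `ẽ_j (x)_i = f̃_j (x)_i = 0` for `j ≠ i`. -/
def elemCrystal {n : ℕ} (a : Fin n → Fin n → ℤ) (i : Fin n) : PreCrystal n ℤ where
  wt := fun x => x • alphaWt a i
  eps := fun j x => if j = i then ((-x : ℤ) : WithBot ℤ) else ⊥
  phi := fun j x => if j = i then ((x : ℤ) : WithBot ℤ) else ⊥
  e := fun j ox => ox.bind (fun x => if j = i then some (x + 1) else none)
  f := fun j ox => ox.bind (fun x => if j = i then some (x - 1) else none)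

/-- A strict embedding of crystals: an injective map `B₁ ⊔ {0} → B₂ ⊔ {0}`
sending `0` to `0`, preserving `wt`, `ε_i`, `φ_i`, and commuting with all
`ẽ_i` and `f̃_i`. -/
structure IsStrictEmb {n : ℕ} {B1 B2 : Type*} (P1 : PreCrystal n B1)
    (P2 : PreCrystal n B2) (Ψ : Option B1 → Option B2) : Prop where
  none_eq : Ψ none = none
  inj : Function.Injective Ψ
  wt_eq : ∀ b b', Ψ (some b) = some b' → P2.wt b' = P1.wt b
  eps_eq : ∀ i b b', Ψ (some b) = some b' → P2.eps i b' = P1.eps i b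
  phi_eq : ∀ i b b', Ψ (some b) = some b' → P2.phi i b' = P1.phi i b
  comm_e : ∀ i ob, Ψ (P1.e i ob) = P2.e i (Ψ ob)
  comm_f : ∀ i ob, Ψ (P1.f i ob) = P2.f i (Ψ ob)

/-- The Kashiwara–Saito conditions (i)–(vi) and (vii′) on a crystal `B` with a
distinguished element `b₀` of weight `0`. -/
structure KSConditions {n : ℕ} (a : Fin n → Fin n → ℤ) {B : Type*}
    (P : PreCrystal n B) (b0 : B) : Prop where
  crystal : IsCrystal a P
  /-- (i) `wt(B) ⊆ ∑_i ℤ_{≤0} α_i`. -/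
  wt_nonpos : ∀ b : B, ∃ c : Fin n → ℤ, (∀ i, c i ≤ 0) ∧
    P.wt b = ∑ i : Fin n, c i • alphaWt a i
  wt_b0 : P.wt b0 = 0
  /-- (ii) `b₀` is the unique element of weight `0`. -/
  uniq_wt_zero : ∀ b : B, P.wt b = 0 → b = b0
  /-- (iii) `ε_i(b₀) = 0`. -/
  eps_b0 : ∀ i, P.eps i b0 = (0 : ℤ)
  /-- (iv) `ε_i(b) ∈ ℤ`. -/
  eps_int : ∀ i b, P.eps i b ≠ ⊥
  /-- (v) and (vi): for each `i` there is a strict embedding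
  `Ψ_i : B → B ⊗ B_i` with `Ψ_i(B) ⊆ B ⊗ {f̃_i^n (0)_i : n ≥ 0}`. -/
  emb : ∀ i : Fin n, ∃ Ψ : Option B → Option (B × ℤ),
    IsStrictEmb P (P.tensor (elemCrystal a i)) Ψ ∧
    ∀ b b' x, Ψ (some b) = some (b', x) → x ≤ 0
  /-- (vii′) every `b ≠ b₀` admits `i` with `ẽ_i b ≠ 0`. -/
  has_e : ∀ b : B, b ≠ b0 → ∃ i, P.e i (some b) ≠ none

/-!
Write `Ψ_i(b) = β ⊗ (x)_i`, so that `x ≤ 0`. The simple roots are linearly independent (average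
the dot product over the finite Weyl group), so weights define a height, with `ht β = ht b + x`.
Inductions on the height, using only the tensor product rule and (vii′), show: `x = 0` forces
`β = b`; the `B_i`-component of `Ψ_i(β)` is always `0`; `Ψ_i` hits every `β ⊗ (x)_i` with `x ≤ 0`
and such a `β`; `ε_i(b) = 0` when `ẽ_i b = 0`; every `b ≠ b₀` has an `i` with `x < 0`.
So `b` is determined by `(β, x)` for such an `i`, and `Φ(b) := Ψ'_i⁻¹(Φ(β) ⊗ (x)_i)` is a
recursion on the height. Since `ẽ_k` and `f̃_k` act on `β ⊗ (x)_i` through `β` and `φ_k(β)` only,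
one more induction shows that `Φ` commutes with `wt`, `ε`, `ẽ` and every `Ψ_j`. Such a map is
unique, so `Φ` and the map built in the other direction are mutually inverse.
-/

section WeylGroup

variable {n : ℕ}

noncomputable def simpleReflection (a : Fin n → Fin n → ℤ) (i : Fin n) :
    Module.End ℚ (Fin n → ℚ) :=
  LinearMap.id - (LinearMap.proj i ∘ₗ (Matrix.of fun i j => (a i j : ℚ)).mulVecLin).smulRight
    (Pi.single i 1)

theorem coe_simpleReflection (a : Fin n → Fin n → ℤ) (i : Fin n) :
    ⇑(simpleReflection a i) = sRefl a i := by
  funext v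
  simp [simpleReflection, sRefl, Matrix.mulVec, dotProduct]

theorem coe_prod_map_simpleReflection (a : Fin n → Fin n → ℤ) (l : List (Fin n)) :
    ⇑(l.map (simpleReflection a)).prod = wProd a l := by
  induction l with
  | nil => rfl
  | cons i l ih =>
    rw [List.map_cons, List.prod_cons, Module.End.coe_mul, ih, coe_simpleReflection]
    rfl

namespace SimpleCartanMatrix

variable (C : SimpleCartanMatrix n)

theorem simpleReflection_single (i : Fin n) :
    simpleReflection C.a i (Pi.single i 1) = -Pi.single i 1 := by
  rw [coe_simpleReflection]
  funext k
  by_cases hk : k = i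
  · subst hk
    norm_num [sRefl, Pi.single_apply, C.diag]
  · simp [sRefl, hk]

theorem simpleReflection_mul_self (i : Fin n) :
    simpleReflection C.a i * simpleReflection C.a i = 1 := by
  refine LinearMap.ext fun v => ?_
  set c := ∑ j, (C.a i j : ℚ) * v j
  have hv : simpleReflection C.a i v = v - c • Pi.single i 1 := by
    simp [coe_simpleReflection, sRefl, c]
  calc simpleReflection C.a i (simpleReflection C.a i v)
      = simpleReflection C.a i v - c • simpleReflection C.a i (Pi.single i 1) := by
        rw [hv, map_sub, map_smul, ← hv]
    _ = v := by rw [hv, simpleReflection_single]; module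

theorem finite_weylGroup : {w : Module.End ℚ (Fin n → ℚ) |
    ∃ l : List (Fin n), w = (l.map (simpleReflection C.a)).prod}.Finite :=
  (C.finiteWeyl.preimage DFunLike.coe_injective.injOn).subset fun _ ⟨l, hl⟩ =>
    ⟨l, by rw [hl, coe_prod_map_simpleReflection]⟩

noncomputable def weylGroup : Finset (Module.End ℚ (Fin n → ℚ)) := C.finite_weylGroup.toFinset

theorem mem_weylGroup {w : Module.End ℚ (Fin n → ℚ)} :
    w ∈ C.weylGroup ↔ ∃ l : List (Fin n), w = (l.map (simpleReflection C.a)).prod := by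
  simp [weylGroup]

theorem mul_simpleReflection_mem_weylGroup {w} (hw : w ∈ C.weylGroup) (i : Fin n) :
    w * simpleReflection C.a i ∈ C.weylGroup := by
  obtain ⟨l, rfl⟩ := C.mem_weylGroup.1 hw
  exact C.mem_weylGroup.2 ⟨l ++ [i], by simp⟩

noncomputable def invariantForm : LinearMap.BilinForm ℚ (Fin n → ℚ) :=
  ∑ w ∈ C.weylGroup, (dotProductBilin ℚ ℚ).compl₁₂ w w

theorem invariantForm_apply (v u : Fin n → ℚ) :
    C.invariantForm v u = ∑ w ∈ C.weylGroup, w v ⬝ᵥ w u := by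
  simp [invariantForm]

theorem invariantForm_simpleReflection (i : Fin n) (v u : Fin n → ℚ) :
    C.invariantForm (simpleReflection C.a i v) (simpleReflection C.a i u) =
      C.invariantForm v u := by
  simp only [invariantForm_apply]
  refine Finset.sum_nbij' (· * simpleReflection C.a i) (· * simpleReflection C.a i)
    (fun w hw => C.mul_simpleReflection_mem_weylGroup hw i)
    (fun w hw => C.mul_simpleReflection_mem_weylGroup hw i) ?_ ?_ fun w _ => rfl
  all_goals intro w _; simp [mul_assoc, C.simpleReflection_mul_self]

theorem invariantForm_self_pos {v : Fin n → ℚ} (hv : v ≠ 0) : 0 < C.invariantForm v v := by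
  rw [invariantForm_apply]
  have hnonneg (w : Module.End ℚ (Fin n → ℚ)) : 0 ≤ w v ⬝ᵥ w v :=
    Fintype.sum_nonneg fun _ => mul_self_nonneg _
  refine Finset.sum_pos' (fun w _ => hnonneg w) ⟨1, C.mem_weylGroup.2 ⟨[], rfl⟩, ?_⟩
  exact (hnonneg 1).lt_of_ne (Ne.symm (mt dotProduct_self_eq_zero.1 hv))

/-- `s_i` fixes such a `q` and negates `α_i`, so `q` is orthogonal to every `α_i` for the
`W`-invariant form, hence to itself. -/
theorem eq_zero_of_forall_sum_mul_eq_zero {q : Fin n → ℚ}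
    (hq : ∀ i, ∑ j, (C.a i j : ℚ) * q j = 0) : q = 0 := by
  have hfix : ∀ i, simpleReflection C.a i q = q := fun i => by
    simp [coe_simpleReflection, sRefl, hq i]
  have horth : ∀ i, C.invariantForm (Pi.single i 1) q = 0 := fun i => by
    have := C.invariantForm_simpleReflection i (Pi.single i 1) q
    rw [simpleReflection_single, hfix, map_neg, LinearMap.neg_apply] at this
    linarith
  have hself : C.invariantForm q q = 0 := by
    have hq : q = ∑ i, q i • Pi.single i 1 := by
      simpa [← Pi.single_smul'] using (Finset.univ_sum_single q).symm
    conv_lhs => arg 1; rw [hq]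
    simp [horth]
  by_contra hne
  exact (C.invariantForm_self_pos hne).ne' hself

theorem sum_smul_alphaWt_injective :
    Function.Injective fun c : Fin n → ℤ => ∑ i, c i • alphaWt C.a i := by
  intro c c' hc
  have hrow (k : Fin n) : ∑ i, c i * C.a k i = ∑ i, c' i * C.a k i := by
    simpa [Finset.sum_apply, alphaWt] using congrFun hc k
  have := C.eq_zero_of_forall_sum_mul_eq_zero (q := fun i => ((c i - c' i : ℤ) : ℚ)) fun k => by
    simp only [Int.cast_sub, mul_sub, Finset.sum_sub_distrib]
    exact_mod_cast by simpa [mul_comm] using sub_eq_zero.2 (hrow k)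
  funext i
  simpa [sub_eq_zero] using congrFun this i

end SimpleCartanMatrix

end WeylGroup

section Transport

variable {n : ℕ} {B₁ B₁' B₂ : Type*} {P₁ : PreCrystal n B₁} {P₁' : PreCrystal n B₁'}
  {P₂ : PreCrystal n B₂} {Φ : B₁ → B₁'} {i : Fin n}

namespace PreCrystal

theorem tensor_e_map {b₁ : B₁} (hphi : P₁'.phi i (Φ b₁) = P₁.phi i b₁)
    (he : Option.map Φ (P₁.e i (some b₁)) = P₁'.e i (some (Φ b₁))) (b₂ : B₂) :
    (P₁'.tensor P₂).e i (some (Φ b₁, b₂)) =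
      Option.map (Prod.map Φ id) ((P₁.tensor P₂).e i (some (b₁, b₂))) := by
  simp only [tensor, Option.bind_some, hphi, ← he]
  split_ifs <;> simp [Option.map_map, Function.comp_def]

theorem tensor_f_map {b₁ : B₁} (hphi : P₁'.phi i (Φ b₁) = P₁.phi i b₁)
    (hf : ∀ d, P₁.f i (some b₁) = some d → P₁'.f i (some (Φ b₁)) = some (Φ d)) {b₂ : B₂}
    {q : B₁ × B₂} (hq : (P₁.tensor P₂).f i (some (b₁, b₂)) = some q) :
    (P₁'.tensor P₂).f i (some (Φ b₁, b₂)) = some (Prod.map Φ id q) := by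
  simp only [tensor, Option.bind_some, hphi] at hq ⊢
  split_ifs at hq ⊢
  · obtain ⟨d, hd, rfl⟩ := Option.map_eq_some_iff.1 hq
    simp [hf d hd]
  · obtain ⟨d, hd, rfl⟩ := Option.map_eq_some_iff.1 hq
    simp [hd]

end PreCrystal

namespace IsStrictEmb

theorem eq_none_iff {Ψ : Option B₁ → Option B₂} (hΨ : IsStrictEmb P₁ P₂ Ψ) {o : Option B₁} :
    Ψ o = none ↔ o = none :=
  ⟨fun ho => hΨ.inj (ho.trans hΨ.none_eq.symm), fun ho => ho ▸ hΨ.none_eq⟩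

theorem exists_eq_some {Ψ : Option B₁ → Option B₂} (hΨ : IsStrictEmb P₁ P₂ Ψ) (b : B₁) :
    ∃ p, Ψ (some b) = some p :=
  Option.ne_none_iff_exists'.1 (mt hΨ.eq_none_iff.1 (Option.some_ne_none b))

variable {Ψ : Option B₁ → Option (B₁ × B₂)} {Ψ' : Option B₁' → Option (B₁' × B₂)}

theorem map_e_eq_of_tensor (hΨ : IsStrictEmb P₁ (P₁.tensor P₂) Ψ)
    (hΨ' : IsStrictEmb P₁' (P₁'.tensor P₂) Ψ') {b : B₁}
    (hb : Ψ' (some (Φ b)) = Option.map (Prod.map Φ id) (Ψ (some b)))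
    (he : ∀ b₁, P₁.e i (some b) = some b₁ →
      Ψ' (some (Φ b₁)) = Option.map (Prod.map Φ id) (Ψ (some b₁)))
    (hbase : ∀ p, Ψ (some b) = some p →
      P₁'.phi i (Φ p.1) = P₁.phi i p.1 ∧
        Option.map Φ (P₁.e i (some p.1)) = P₁'.e i (some (Φ p.1))) :
    Option.map Φ (P₁.e i (some b)) = P₁'.e i (some (Φ b)) := by
  obtain ⟨p, hp⟩ := hΨ.exists_eq_some b
  have key : Ψ' (P₁'.e i (some (Φ b))) = Option.map (Prod.map Φ id) (Ψ (P₁.e i (some b))) := by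
    rw [hΨ'.comm_e, hb, hp, hΨ.comm_e, hp, Option.map_some]
    exact PreCrystal.tensor_e_map (hbase p hp).1 (hbase p hp).2 p.2
  cases hb₁ : P₁.e i (some b) with
  | none =>
    rw [hb₁, hΨ.none_eq, Option.map_none, hΨ'.eq_none_iff] at key
    rw [key, Option.map_none]
  | some b₁ =>
    rw [hb₁, ← he b₁ hb₁] at key
    exact (hΨ'.inj key).symm

theorem eq_map_of_f_eq (hΨ : IsStrictEmb P₁ (P₁.tensor P₂) Ψ)
    (hΨ' : IsStrictEmb P₁' (P₁'.tensor P₂) Ψ') {b₁ b : B₁}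
    (hf : P₁.f i (some b₁) = some b) (hf' : P₁'.f i (some (Φ b₁)) = some (Φ b))
    (hb₁ : Ψ' (some (Φ b₁)) = Option.map (Prod.map Φ id) (Ψ (some b₁)))
    (hbase : ∀ p, Ψ (some b₁) = some p →
      P₁'.phi i (Φ p.1) = P₁.phi i p.1 ∧
        ∀ d, P₁.f i (some p.1) = some d → P₁'.f i (some (Φ p.1)) = some (Φ d)) :
    Ψ' (some (Φ b)) = Option.map (Prod.map Φ id) (Ψ (some b)) := by
  obtain ⟨p, hp⟩ := hΨ.exists_eq_some b₁
  obtain ⟨q, hq⟩ := hΨ.exists_eq_some b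
  have hpq : (P₁.tensor P₂).f i (some p) = some q := by rw [← hp, ← hΨ.comm_f, hf, hq]
  rw [← hf', hΨ'.comm_f, hb₁, hp, Option.map_some, hq, Option.map_some]
  exact PreCrystal.tensor_f_map (hbase p hp).1 (hbase p hp).2 hpq

end IsStrictEmb

namespace IsCrystal

variable {a : Fin n → Fin n → ℤ} {B B' : Type*} {P : PreCrystal n B} {P' : PreCrystal n B'}
  {Φ : B → B'}

theorem e_injective (hP : IsCrystal a P) {u v d : B} (hu : P.e i (some u) = some d)
    (hv : P.e i (some v) = some d) : u = v :=
  Option.some_injective _ (((hP.f_iff_e i d u).2 hu).symm.trans ((hP.f_iff_e i d v).2 hv))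

theorem f_eq_some_of_map_e (hP : IsCrystal a P) (hP' : IsCrystal a P') {c d : B}
    (he : Option.map Φ (P.e i (some d)) = P'.e i (some (Φ d))) (hf : P.f i (some c) = some d) :
    P'.f i (some (Φ c)) = some (Φ d) := by
  rw [(hP.f_iff_e i c d).1 hf, Option.map_some] at he
  exact (hP'.f_iff_e i _ _).2 he.symm

theorem map_f_of_map_e (hP : IsCrystal a P) (hP' : IsCrystal a P') {Φ' : B' → B}
    (hinv : Function.LeftInverse Φ' Φ)
    (he : ∀ b, Option.map Φ (P.e i (some b)) = P'.e i (some (Φ b)))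
    (he' : ∀ b', Option.map Φ' (P'.e i (some b')) = P.e i (some (Φ' b'))) (b : B) :
    Option.map Φ (P.f i (some b)) = P'.f i (some (Φ b)) := by
  cases hf : P.f i (some b) with
  | some c => exact (hP.f_eq_some_of_map_e hP' (he c) hf).symm
  | none =>
    cases hf' : P'.f i (some (Φ b)) with
    | none => rfl
    | some c' =>
      have := he' c'
      rw [(hP'.f_iff_e i _ _).1 hf', Option.map_some, hinv b] at this
      rw [(hP.f_iff_e i b _).2 this.symm] at hf
      exact absurd hf (Option.some_ne_none _)

end IsCrystal

end Transport

namespace KSConditions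

variable {n : ℕ} {C : SimpleCartanMatrix n} {B : Type*} {P : PreCrystal n B} {b0 : B}
  (h : KSConditions C.a P b0)

section Height

noncomputable def rootCoeff (b : B) : Fin n → ℤ := (h.wt_nonpos b).choose

theorem rootCoeff_nonpos (b : B) (i : Fin n) : h.rootCoeff b i ≤ 0 :=
  (h.wt_nonpos b).choose_spec.1 i

theorem wt_eq_sum_rootCoeff (b : B) : P.wt b = ∑ i, h.rootCoeff b i • alphaWt C.a i :=
  (h.wt_nonpos b).choose_spec.2

theorem rootCoeff_eq {b : B} {c : Fin n → ℤ} (hc : P.wt b = ∑ i, c i • alphaWt C.a i) :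
    h.rootCoeff b = c :=
  C.sum_smul_alphaWt_injective ((h.wt_eq_sum_rootCoeff b).symm.trans hc)

noncomputable def height (b : B) : ℕ := (-∑ i, h.rootCoeff b i).toNat

theorem height_cast (b : B) : (h.height b : ℤ) = -∑ i, h.rootCoeff b i :=
  Int.toNat_of_nonneg (neg_nonneg.2 (Finset.sum_nonpos fun i _ => h.rootCoeff_nonpos b i))

theorem induction_height {motive : B → Prop}
    (step : ∀ b, (∀ c, h.height c < h.height b → motive c) → motive b) (b : B) : motive b :=
  (measure h.height).wf.induction b step

theorem height_cast_of_wt_eq {b b' : B} {i : Fin n} {x : ℤ}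
    (hw : P.wt b' = P.wt b + x • alphaWt C.a i) : (h.height b' : ℤ) = h.height b - x := by
  have hc : h.rootCoeff b' = h.rootCoeff b + Pi.single i x := h.rootCoeff_eq <| by
    simp [hw, h.wt_eq_sum_rootCoeff b, add_smul, Finset.sum_add_distrib, Pi.single_apply,
      ite_smul]
  simp [height_cast, hc, Finset.sum_add_distrib]
  ring

theorem eq_b0_of_height_eq_zero {b : B} (hb : h.height b = 0) : b = b0 := by
  have hsum : ∑ i, h.rootCoeff b i = 0 := by linarith [h.height_cast b]
  have hzero := (Finset.sum_eq_zero_iff_of_nonpos fun i _ => h.rootCoeff_nonpos b i).1 hsum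
  exact h.uniq_wt_zero b (by simp [h.wt_eq_sum_rootCoeff b, hzero])

theorem height_b0 : h.height b0 = 0 := by
  have : h.rootCoeff b0 = 0 := h.rootCoeff_eq (by simp [h.wt_b0])
  simp [height, this]

theorem height_of_e {b b₁ : B} {i : Fin n} (he : P.e i (some b) = some b₁) :
    h.height b = h.height b₁ + 1 := by
  have := h.height_cast_of_wt_eq (b := b) (b' := b₁) (x := 1)
    (by rw [h.crystal.wt_e i b b₁ he, one_smul])
  omega

theorem e_b0 (h : KSConditions C.a P b0) (i : Fin n) : P.e i (some b0) = none := by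
  cases he : P.e i (some b0) with
  | none => rfl
  | some b₁ => have := h.height_of_e he; rw [h.height_b0] at this; omega

theorem exists_e_eq_some (h : KSConditions C.a P b0) {b : B} (hb : b ≠ b0) :
    ∃ k b₁, P.e k (some b) = some b₁ := by
  obtain ⟨k, hk⟩ := h.has_e b hb
  exact ⟨k, Option.ne_none_iff_exists'.1 hk⟩

end Height

section IntegerValues

noncomputable def epsZ (i : Fin n) (b : B) : ℤ := (P.eps i b).unbot (h.eps_int i b)

theorem coe_epsZ (i : Fin n) (b : B) : (h.epsZ i b : WithBot ℤ) = P.eps i b :=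
  WithBot.coe_unbot _ _

noncomputable def phiZ (i : Fin n) (b : B) : ℤ := h.epsZ i b + P.wt b i

theorem coe_phiZ (i : Fin n) (b : B) : (h.phiZ i b : WithBot ℤ) = P.phi i b := by
  rw [phiZ, WithBot.coe_add, coe_epsZ, h.crystal.phi_eq]

theorem epsZ_b0 (i : Fin n) : h.epsZ i b0 = 0 :=
  WithBot.coe_injective ((h.coe_epsZ i b0).trans (h.eps_b0 i))

theorem phiZ_b0 (i : Fin n) : h.phiZ i b0 = 0 := by
  simp [phiZ, epsZ_b0, h.wt_b0]

theorem phiZ_of_e {i : Fin n} {b b₁ : B} (he : P.e i (some b) = some b₁) :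
    h.phiZ i b₁ = h.phiZ i b + 1 := by
  have := h.crystal.phi_e i b b₁ he
  rw [← h.coe_phiZ, ← h.coe_phiZ] at this
  exact_mod_cast this

end IntegerValues

section Embedding

noncomputable def embedding (i : Fin n) : Option B → Option (B × ℤ) := (h.emb i).choose

theorem isStrictEmb_embedding (i : Fin n) :
    IsStrictEmb P (P.tensor (elemCrystal C.a i)) (h.embedding i) :=
  (h.emb i).choose_spec.1

/-- `Ψ_i(b) = β ⊗ (x)_i`, as the pair `(β, x)`. -/
noncomputable def psi (i : Fin n) (b : B) : B × ℤ :=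
  (h.embedding i (some b)).get <| Option.isSome_iff_exists.2 <|
    (h.isStrictEmb_embedding i).exists_eq_some b

theorem embedding_some (i : Fin n) (b : B) : h.embedding i (some b) = some (h.psi i b) :=
  (Option.some_get _).symm

theorem embedding_eq_map (i : Fin n) (o : Option B) :
    h.embedding i o = Option.map (h.psi i) o := by
  cases o with
  | none => exact (h.isStrictEmb_embedding i).none_eq
  | some b => exact h.embedding_some i b

theorem psi_snd_nonpos (i : Fin n) (b : B) : (h.psi i b).2 ≤ 0 :=
  (h.emb i).choose_spec.2 b _ _ (h.embedding_some i b)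

theorem psi_injective (i : Fin n) : Function.Injective (h.psi i) := fun b c hbc =>
  Option.some_injective _ <| (h.isStrictEmb_embedding i).inj <| by
    rw [embedding_some, embedding_some, hbc]

theorem map_psi_e (i k : Fin n) (b : B) :
    Option.map (h.psi i) (P.e k (some b)) =
      (P.tensor (elemCrystal C.a i)).e k (some (h.psi i b)) := by
  rw [← embedding_eq_map, (h.isStrictEmb_embedding i).comm_e, embedding_some]

theorem map_psi_f (i k : Fin n) (b : B) :
    Option.map (h.psi i) (P.f k (some b)) =
      (P.tensor (elemCrystal C.a i)).f k (some (h.psi i b)) := by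
  rw [← embedding_eq_map, (h.isStrictEmb_embedding i).comm_f, embedding_some]

theorem wt_eq_wt_psi (i : Fin n) (b : B) :
    P.wt b = P.wt (h.psi i b).1 + (h.psi i b).2 • alphaWt C.a i :=
  ((h.isStrictEmb_embedding i).wt_eq b _ (h.embedding_some i b)).symm

theorem height_psi_fst (i : Fin n) (b : B) :
    (h.height (h.psi i b).1 : ℤ) = h.height b + (h.psi i b).2 := by
  have := h.height_cast_of_wt_eq (h.wt_eq_wt_psi i b)
  omega

theorem height_psi_fst_le (i : Fin n) (b : B) : h.height (h.psi i b).1 ≤ h.height b := by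
  have := h.height_psi_fst i b
  have := h.psi_snd_nonpos i b
  omega

theorem height_psi_fst_lt {i : Fin n} {b : B} (hx : (h.psi i b).2 < 0) :
    h.height (h.psi i b).1 < h.height b := by
  have := h.height_psi_fst i b
  omega

end Embedding

section TensorRules

variable {i k : Fin n} {p : B × ℤ}

theorem tensor_elem_e_left (hk : k ≠ i ∨ -p.2 ≤ h.phiZ i p.1) :
    (P.tensor (elemCrystal C.a i)).e k (some p) = Option.map (·, p.2) (P.e k (some p.1)) := by
  refine if_pos ?_
  by_cases hki : k = i
  · subst hki
    simpa [elemCrystal, ← h.coe_phiZ] using hk.resolve_left (not_not_intro rfl)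
  · simp [elemCrystal, hki]

theorem tensor_elem_e_right (hlt : h.phiZ i p.1 < -p.2) :
    (P.tensor (elemCrystal C.a i)).e i (some p) = some (p.1, p.2 + 1) := by
  refine (if_neg ?_).trans ?_
  · simpa [elemCrystal, ← h.coe_phiZ] using hlt
  · simp [elemCrystal]

theorem tensor_elem_f_left (hk : k ≠ i ∨ -p.2 < h.phiZ i p.1) :
    (P.tensor (elemCrystal C.a i)).f k (some p) = Option.map (·, p.2) (P.f k (some p.1)) := by
  refine if_pos ?_
  by_cases hki : k = i
  · subst hki
    simpa [elemCrystal, ← h.coe_phiZ] using hk.resolve_left (not_not_intro rfl)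
  · simp [elemCrystal, hki, ← h.coe_phiZ]

theorem tensor_elem_f_right (hle : h.phiZ i p.1 ≤ -p.2) :
    (P.tensor (elemCrystal C.a i)).f i (some p) = some (p.1, p.2 - 1) := by
  refine (if_neg ?_).trans ?_
  · simpa [elemCrystal, ← h.coe_phiZ] using hle
  · simp [elemCrystal]

theorem epsZ_eq_epsZ_psi_fst {b : B} (hk : k ≠ i ∨ -(h.psi i b).2 ≤ h.phiZ i (h.psi i b).1) :
    h.epsZ k b = h.epsZ k (h.psi i b).1 := by
  have hε := (h.isStrictEmb_embedding i).eps_eq k b _ (h.embedding_some i b)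
  simp only [PreCrystal.tensor] at hε
  apply WithBot.coe_injective
  rw [h.coe_epsZ, h.coe_epsZ, ← hε, max_eq_left_iff]
  by_cases hki : k = i
  · subst hki
    have := hk.resolve_left (not_not_intro rfl)
    simp only [elemCrystal, if_pos, ← h.coe_epsZ, ← WithBot.coe_add, WithBot.coe_le_coe]
    simp only [phiZ] at this
    omega
  · simp [elemCrystal, hki]

end TensorRules

section Decomposition

theorem psi_b0 (i : Fin n) : h.psi i b0 = (b0, 0) := by
  have hβ := h.height_psi_fst i b0
  have hx := h.psi_snd_nonpos i b0
  rw [h.height_b0] at hβ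
  have hx0 : (h.psi i b0).2 = 0 := by omega
  exact Prod.ext (h.eq_b0_of_height_eq_zero (by omega)) hx0

theorem e_psi_fst_of_psi_snd_eq_zero {i k : Fin n} {b b₁ : B} (hx : (h.psi i b).2 = 0)
    (he : P.e k (some b) = some b₁) :
    P.e k (some (h.psi i b).1) = some (h.psi i b₁).1 ∧ (h.psi i b₁).2 = 0 := by
  have hmap := h.map_psi_e i k b
  rw [he, Option.map_some] at hmap
  by_cases hk : k ≠ i ∨ -(h.psi i b).2 ≤ h.phiZ i (h.psi i b).1
  · rw [h.tensor_elem_e_left hk] at hmap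
    obtain ⟨β₁, hβ₁, hpair⟩ := Option.map_eq_some_iff.1 hmap.symm
    rw [← hpair, hβ₁, hx]
    exact ⟨rfl, rfl⟩
  · -- `ẽ_i` acting on the `B_i` factor would make the second component positive
    push Not at hk
    obtain ⟨rfl, hlt⟩ := hk
    rw [h.tensor_elem_e_right hlt, Option.some_inj] at hmap
    have := h.psi_snd_nonpos k b₁
    rw [hmap] at this
    dsimp only at this
    omega

theorem psi_fst_eq_self_of_psi_snd_eq_zero {i : Fin n} {b : B} (hx : (h.psi i b).2 = 0) :
    (h.psi i b).1 = b := by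
  induction b using h.induction_height with
  | step b ih =>
  by_cases hb : b = b0
  · rw [hb, h.psi_b0]
  obtain ⟨k, b₁, hb₁⟩ := h.exists_e_eq_some hb
  obtain ⟨he, hx₁⟩ := h.e_psi_fst_of_psi_snd_eq_zero hx hb₁
  rw [ih b₁ (by rw [h.height_of_e hb₁]; omega) hx₁] at he
  exact h.crystal.e_injective he hb₁

theorem psi_eq_self_of_psi_snd_eq_zero {i : Fin n} {b : B} (hx : (h.psi i b).2 = 0) :
    h.psi i b = (b, 0) :=
  Prod.ext (h.psi_fst_eq_self_of_psi_snd_eq_zero hx) hx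

theorem psi_snd_psi_fst (i : Fin n) (b : B) : (h.psi i (h.psi i b).1).2 = 0 := by
  induction b using h.induction_height with
  | step b ih =>
  by_cases hb : b = b0
  · rw [hb, h.psi_b0, h.psi_b0]
  obtain ⟨k, b₁, hb₁⟩ := h.exists_e_eq_some hb
  have hd := ih b₁ (by rw [h.height_of_e hb₁]; omega)
  set d := (h.psi i b₁).1
  have hmap := h.map_psi_f i k b₁
  rw [(h.crystal.f_iff_e k b₁ b).2 hb₁, Option.map_some] at hmap
  by_cases hk : k ≠ i ∨ -(h.psi i b₁).2 < h.phiZ i d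
  · rw [h.tensor_elem_f_left hk] at hmap
    obtain ⟨β, hβ, hpair⟩ := Option.map_eq_some_iff.1 hmap.symm
    have hmap' := h.map_psi_f i k d
    have hk' : k ≠ i ∨ -(h.psi i d).2 < h.phiZ i (h.psi i d).1 := by
      rw [h.psi_eq_self_of_psi_snd_eq_zero hd]
      have := h.psi_snd_nonpos i b₁
      exact hk.imp_right fun hlt => by dsimp only; omega
    rw [hβ, Option.map_some, h.tensor_elem_f_left hk', h.psi_fst_eq_self_of_psi_snd_eq_zero hd,
      hβ, Option.map_some, Option.some_inj] at hmap'
    rw [← hpair, hmap', hd]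
  · push Not at hk
    obtain ⟨rfl, hle⟩ := hk
    rw [h.tensor_elem_f_right hle, Option.some_inj] at hmap
    rw [hmap]
    exact hd

theorem eq_b0_of_forall_psi_snd_eq_zero {b : B} (hx : ∀ i, (h.psi i b).2 = 0) : b = b0 := by
  induction b using h.induction_height with
  | step b ih =>
  by_contra hb
  obtain ⟨k, b₁, hb₁⟩ := h.exists_e_eq_some hb
  have hb₁0 : b₁ = b0 := ih b₁ (by rw [h.height_of_e hb₁]; omega) fun i =>
    (h.e_psi_fst_of_psi_snd_eq_zero (hx i) hb₁).2
  subst hb₁0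
  have hmap := h.map_psi_f k k b₁
  rw [(h.crystal.f_iff_e k b₁ b).2 hb₁, Option.map_some, h.psi_b0,
    h.tensor_elem_f_right (by simp [h.phiZ_b0]), Option.some_inj] at hmap
  have := hx k
  rw [hmap] at this
  simp at this

theorem exists_psi_snd_neg {b : B} (hb : b ≠ b0) : ∃ i, (h.psi i b).2 < 0 := by
  by_contra! hx
  exact hb (h.eq_b0_of_forall_psi_snd_eq_zero fun i => (h.psi_snd_nonpos i b).antisymm (hx i))

theorem epsZ_eq_zero_of_e_eq_none {i : Fin n} {b : B} (he : P.e i (some b) = none) :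
    h.epsZ i b = 0 := by
  induction b using h.induction_height with
  | step b ih =>
  by_cases hb : b = b0
  · rw [hb, h.epsZ_b0]
  obtain ⟨j, hj⟩ := h.exists_psi_snd_neg hb
  have hmap := h.map_psi_e j i b
  rw [he, Option.map_none] at hmap
  by_cases hk : i ≠ j ∨ -(h.psi j b).2 ≤ h.phiZ j (h.psi j b).1
  · rw [h.tensor_elem_e_left hk, eq_comm, Option.map_eq_none_iff] at hmap
    rw [h.epsZ_eq_epsZ_psi_fst hk]
    exact ih _ (h.height_psi_fst_lt hj) hmap
  · push Not at hk
    obtain ⟨rfl, hlt⟩ := hk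
    rw [h.tensor_elem_e_right hlt] at hmap
    exact absurd hmap.symm (Option.some_ne_none _)

theorem exists_psi_eq {i : Fin n} {d : B} (hd : (h.psi i d).2 = 0) {x : ℤ} (hx : x ≤ 0) :
    ∃ b, h.psi i b = (d, x) := by
  obtain ⟨M, rfl⟩ : ∃ M : ℕ, x = -M := ⟨(-x).toNat, by omega⟩
  induction M generalizing d with
  | zero => exact ⟨d, by simpa using h.psi_eq_self_of_psi_snd_eq_zero hd⟩
  | succ M ihM =>
  induction d using h.induction_height with
  | step d ihd =>
  by_cases hφ : h.phiZ i d ≤ M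
  · obtain ⟨b', hb'⟩ := ihM hd (by omega)
    have hmap := h.map_psi_f i i b'
    rw [hb', h.tensor_elem_f_right (by simpa using hφ)] at hmap
    obtain ⟨b, -, hb⟩ := Option.map_eq_some_iff.1 hmap
    exact ⟨b, by rw [hb]; push_cast; ring_nf⟩
  have hd0 : d ≠ b0 := by
    rintro rfl
    rw [h.phiZ_b0] at hφ
    omega
  obtain ⟨k, u, hu⟩ := h.exists_e_eq_some hd0
  obtain ⟨c, hc⟩ := ihd u (by rw [h.height_of_e hu]; omega)
    (h.e_psi_fst_of_psi_snd_eq_zero hd hu).2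
  have hk : k ≠ i ∨ -(h.psi i c).2 < h.phiZ i (h.psi i c).1 := by
    by_cases hki : k = i
    · subst hki
      rw [hc, h.phiZ_of_e hu]
      right
      push_cast
      omega
    · exact Or.inl hki
  have hmap := h.map_psi_f i k c
  rw [h.tensor_elem_f_left hk, hc, (h.crystal.f_iff_e k u d).2 hu, Option.map_some] at hmap
  obtain ⟨b, -, hb⟩ := Option.map_eq_some_iff.1 hmap
  exact ⟨b, hb⟩

end Decomposition

section Isomorphism

variable {B' : Type*} {P' : PreCrystal n B'} {b0' : B'} (h' : KSConditions C.a P' b0')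

noncomputable def negIndex {b : B} (hb : b ≠ b0) : Fin n := (h.exists_psi_snd_neg hb).choose

theorem psi_negIndex_snd_neg {b : B} (hb : b ≠ b0) : (h.psi (h.negIndex hb) b).2 < 0 :=
  (h.exists_psi_snd_neg hb).choose_spec

noncomputable def psiPreimage (i : Fin n) (p : B × ℤ) : B :=
  @Function.invFun _ _ ⟨b0⟩ (h.psi i) p

theorem psi_psiPreimage {i : Fin n} {p : B × ℤ} (hp : ∃ b, h.psi i b = p) :
    h.psi i (h.psiPreimage i p) = p :=
  @Function.invFun_eq _ _ ⟨b0⟩ _ _ hp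

open Classical in
noncomputable def iso (b : B) : B' :=
  if hb : b = b0 then b0'
  else h'.psiPreimage (h.negIndex hb)
    (iso (h.psi (h.negIndex hb) b).1, (h.psi (h.negIndex hb) b).2)
termination_by h.height b
decreasing_by exact h.height_psi_fst_lt (h.psi_negIndex_snd_neg hb)

theorem iso_b0 : h.iso h' b0 = b0' := by
  rw [iso, dif_pos rfl]

structure Intertwines (Φ : B → B') (b : B) : Prop where
  wt_eq : P'.wt (Φ b) = P.wt b
  map_e : ∀ i, Option.map Φ (P.e i (some b)) = P'.e i (some (Φ b))
  eps_eq : ∀ i, P'.eps i (Φ b) = P.eps i b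
  psi_eq : ∀ i, h'.psi i (Φ b) = Prod.map Φ id (h.psi i b)

variable {h h'}

theorem Intertwines.phi_eq {Φ : B → B'} {b : B} (hΦ : Intertwines h h' Φ b) (i : Fin n) :
    P'.phi i (Φ b) = P.phi i b := by
  rw [h.crystal.phi_eq, h'.crystal.phi_eq, hΦ.eps_eq, hΦ.wt_eq]

theorem Intertwines.embedding_eq {Φ : B → B'} {b : B} (hΦ : Intertwines h h' Φ b) (i : Fin n) :
    h'.embedding i (some (Φ b)) = Option.map (Prod.map Φ id) (h.embedding i (some b)) := by
  rw [embedding_some, embedding_some, hΦ.psi_eq, Option.map_some]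

variable (h h')

theorem intertwines_iso_b0 : Intertwines h h' (h.iso h') b0 where
  wt_eq := by rw [iso_b0, h.wt_b0, h'.wt_b0]
  map_e i := by rw [iso_b0, h.e_b0, h'.e_b0, Option.map_none]
  eps_eq i := by rw [iso_b0, h.eps_b0, h'.eps_b0]
  psi_eq i := by rw [iso_b0, h.psi_b0, h'.psi_b0, Prod.map, iso_b0, id]

section Step

variable {h h'} {b : B}

theorem psi_iso_negIndex (hb : b ≠ b0)
    (hlow : ∀ c, h.height c < h.height b → Intertwines h h' (h.iso h') c) :
    h'.psi (h.negIndex hb) (h.iso h' b) = Prod.map (h.iso h') id (h.psi (h.negIndex hb) b) := by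
  have hx := h.psi_negIndex_snd_neg hb
  have hβ : (h'.psi (h.negIndex hb) (h.iso h' (h.psi (h.negIndex hb) b).1)).2 = 0 := by
    rw [(hlow _ (h.height_psi_fst_lt hx)).psi_eq]
    exact h.psi_snd_psi_fst _ b
  rw [iso, dif_neg hb]
  exact h'.psi_psiPreimage (h'.exists_psi_eq hβ hx.le)

theorem wt_iso (hb : b ≠ b0)
    (hlow : ∀ c, h.height c < h.height b → Intertwines h h' (h.iso h') c) :
    P'.wt (h.iso h' b) = P.wt b := by
  rw [h'.wt_eq_wt_psi (h.negIndex hb), psi_iso_negIndex hb hlow, h.wt_eq_wt_psi (h.negIndex hb) b]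
  simp [(hlow _ (h.height_psi_fst_lt (h.psi_negIndex_snd_neg hb))).wt_eq]

theorem map_e_iso (hb : b ≠ b0)
    (hlow : ∀ c, h.height c < h.height b → Intertwines h h' (h.iso h') c) (i : Fin n) :
    Option.map (h.iso h') (P.e i (some b)) = P'.e i (some (h.iso h' b)) := by
  refine (h.isStrictEmb_embedding _).map_e_eq_of_tensor (h'.isStrictEmb_embedding (h.negIndex hb))
    ?_ (fun b₁ hb₁ => ?_) (fun p hp => ?_)
  · rw [embedding_some, embedding_some, psi_iso_negIndex hb hlow, Option.map_some]
  · exact (hlow b₁ (by rw [h.height_of_e hb₁]; omega)).embedding_eq _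
  · rw [embedding_some, Option.some_inj] at hp
    subst hp
    have hβ := hlow _ (h.height_psi_fst_lt (h.psi_negIndex_snd_neg hb))
    exact ⟨hβ.phi_eq i, hβ.map_e i⟩

theorem eps_iso (hb : b ≠ b0)
    (hlow : ∀ c, h.height c < h.height b → Intertwines h h' (h.iso h') c) (i : Fin n) :
    P'.eps i (h.iso h' b) = P.eps i b := by
  have he' := map_e_iso hb hlow i
  cases he : P.e i (some b) with
  | none =>
    rw [he, Option.map_none] at he'
    rw [← h.coe_epsZ, ← h'.coe_epsZ, h.epsZ_eq_zero_of_e_eq_none he,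
      h'.epsZ_eq_zero_of_e_eq_none he'.symm]
  | some b₁ =>
    rw [he, Option.map_some] at he'
    rw [← h.crystal.eps_e i b b₁ he, ← h'.crystal.eps_e i _ _ he'.symm,
      (hlow b₁ (by rw [h.height_of_e he]; omega)).eps_eq i]

theorem psi_iso (hb : b ≠ b0)
    (hlow : ∀ c, h.height c < h.height b → Intertwines h h' (h.iso h') c)
    (hE : ∀ d, h.height d ≤ h.height b → ∀ k,
      Option.map (h.iso h') (P.e k (some d)) = P'.e k (some (h.iso h' d))) (i : Fin n) :
    h'.psi i (h.iso h' b) = Prod.map (h.iso h') id (h.psi i b) := by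
  -- transport `Ψ_i` along `b = f̃_k b₁`, where `b₁ = ẽ_k b` has lower height
  obtain ⟨k, b₁, hb₁⟩ := h.exists_e_eq_some hb
  have hlt : h.height b₁ < h.height b := by rw [h.height_of_e hb₁]; omega
  have hf : P.f k (some b₁) = some b := (h.crystal.f_iff_e k b₁ b).2 hb₁
  have hemb := (h.isStrictEmb_embedding i).eq_map_of_f_eq (h'.isStrictEmb_embedding i) hf
    (h.crystal.f_eq_some_of_map_e h'.crystal (hE b le_rfl k) hf) ((hlow b₁ hlt).embedding_eq i)
    (fun p hp => ?_)
  · rwa [embedding_some, embedding_some, Option.map_some, Option.some_inj] at hemb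
  · rw [embedding_some, Option.some_inj] at hp
    subst hp
    have hβ := h.height_psi_fst_le i b₁
    refine ⟨(hlow _ (by omega)).phi_eq k, fun d hd =>
      h.crystal.f_eq_some_of_map_e h'.crystal (hE d ?_ k) hd⟩
    have := h.height_of_e ((h.crystal.f_iff_e k _ d).1 hd)
    omega

end Step

theorem intertwines_iso (b : B) : Intertwines h h' (h.iso h') b := by
  induction b using h.induction_height with
  | step b ih =>
  by_cases hb : b = b0
  · rw [hb]
    exact intertwines_iso_b0 h h'
  have hE : ∀ d, h.height d ≤ h.height b → ∀ k,
      Option.map (h.iso h') (P.e k (some d)) = P'.e k (some (h.iso h' d)) := by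
    intro d hd k
    by_cases hd0 : d = b0
    · rw [hd0]
      exact (intertwines_iso_b0 h h').map_e k
    · exact map_e_iso hd0 (fun c hc => ih c (by omega)) k
  exact ⟨wt_iso hb ih, map_e_iso hb ih, eps_iso hb ih, psi_iso hb ih hE⟩

theorem eq_of_psi_eq {Φ₁ Φ₂ : B → B'} (h0 : Φ₁ b0 = Φ₂ b0)
    (hψ₁ : ∀ i b, h'.psi i (Φ₁ b) = Prod.map Φ₁ id (h.psi i b))
    (hψ₂ : ∀ i b, h'.psi i (Φ₂ b) = Prod.map Φ₂ id (h.psi i b)) : Φ₁ = Φ₂ := by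
  funext b
  induction b using h.induction_height with
  | step b ih =>
  by_cases hb : b = b0
  · rw [hb, h0]
  obtain ⟨j, hj⟩ := h.exists_psi_snd_neg hb
  apply h'.psi_injective j
  rw [hψ₁, hψ₂, Prod.map, Prod.map, ih _ (h.height_psi_fst_lt hj)]

theorem iso_leftInverse : Function.LeftInverse (h'.iso h) (h.iso h') :=
  congrFun <| eq_of_psi_eq h h (Φ₂ := id) (by simp [iso_b0])
    (fun i b => by
      simp only [(intertwines_iso h' h _).psi_eq, (intertwines_iso h h' b).psi_eq]
      rfl)
    (fun i b => by simp)

end Isomorphism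

end KSConditions

/-- Any two crystals satisfying the Kashiwara–Saito conditions
(i)–(vi) and (vii′) are isomorphic by an isomorphism matching the distinguished
elements. -/
theorem kashiwara_saito_uniqueness {n : ℕ} (C : SimpleCartanMatrix n)
    {B B' : Type*} (P : PreCrystal n B) (P' : PreCrystal n B') (b0 : B) (b0' : B')
    (h : KSConditions C.a P b0) (h' : KSConditions C.a P' b0') :
    ∃ Φ : B → B', Function.Bijective Φ ∧ Φ b0 = b0' ∧
      (∀ b, P'.wt (Φ b) = P.wt b) ∧
      (∀ i b, P'.eps i (Φ b) = P.eps i b) ∧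
      (∀ i b, P'.phi i (Φ b) = P.phi i b) ∧
      (∀ i ob, Option.map Φ (P.e i ob) = P'.e i (Option.map Φ ob)) ∧
      (∀ i ob, Option.map Φ (P.f i ob) = P'.f i (Option.map Φ ob)) := by
  have hΦ := h.intertwines_iso h'
  have hΦ' := h'.intertwines_iso h
  refine ⟨h.iso h', ⟨(h.iso_leftInverse h').injective, (h'.iso_leftInverse h).surjective⟩,
    h.iso_b0 h', fun b => (hΦ b).wt_eq, fun i b => (hΦ b).eps_eq i, fun i b => (hΦ b).phi_eq i,
    ?_, ?_⟩
  · rintro i (_ | b)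
    · simp [h.crystal.e_none, h'.crystal.e_none]
    · exact (hΦ b).map_e i
  · rintro i (_ | b)
    · simp [h.crystal.f_none, h'.crystal.f_none]
    · exact h.crystal.map_f_of_map_e h'.crystal (h.iso_leftInverse h')
        (fun b => (hΦ b).map_e i) (fun b => (hΦ' b).map_e i) b
end

section
/- Let ι = (i_1,…,i_N) be a reduced word for the longest element w_0 of S_{n+1}, let c ∈ (ℂ^×)^N and set g = Θ_ι(c); fix i ∈ {1,…,n} with g_{i+1,i} ≠ 0 and α ∈ ℂ^×. Define ε_i(g) = g_{i+1,i+1}/g_{i+1,i}, φ_i(g) = (g_{i,i}/g_{i+1,i+1})·ε_i(g), and e_i^α(g) = x_i((α−1)φ_i(g)) · g · x_i((α^{-1}−1)ε_i(g)). Then for every j ∈ {1,…,n}: Δ_{w_0Λ_j,s_jΛ_j}(e_i^α(g)) = Δ_{w_0Λ_j,s_jΛ_j}(g) + δ_{ij}(α^{-1}−1)ε_i(g) and Δ_{w_0Λ_j,Λ_j}(e_i^α(g)) = Δ_{w_0Λ_j,Λ_j}(g) = 1. Consequently, Φ^{(+)}(e_i^α(g)) = Φ^{(+)}(g) + (α^{-1}−1)ε_i(g),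 where Φ^{(+)}(g) = ∑_{j=1}^n Δ_{w_0Λ_j,s_jΛ_j}(g). -/
/-!
`Θ_ι(c)` lies in the Bruhat cell `N w̄₀ N`. Indeed `y_a(c) α_a^∨(c⁻¹) = x_a(c⁻¹) s̄_a x_a(c)`,
and if `σ` is the product of a proper prefix of a reduced word and `a` the next letter, then
`σ(a) < σ(a+1)` (count inversions), so `σ̄ x_a(t) σ̄⁻¹` is upper unitriangular. Hence the factors
can be absorbed one at a time, giving `Θ = n₁ w̄₀ n₂` with `n₁, n₂` upper unitriangular. As `w̄₀`
is a signed permutation matrix of the order-reversing permutation, `w̄₀⁻¹ n₁ w̄₀` is lower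
unitriangular, so all leading principal minors of `w̄₀⁻¹ Θ` equal `1`.

For the same reason `w̄₀⁻¹ x_i(t) = L w̄₀⁻¹` with `L` lower unitriangular, so the left factor of
`e_i^α` does not change the leading minors of `w̄₀⁻¹ e_i^α(g) Z`. The right factor `x_i(b)` moves
past `s̄_j` as an upper unitriangular matrix when `j ≠ i`, and as `y_i(-b)` when `j = i`; by
column expansion the latter adds `b` times a leading minor of `w̄₀⁻¹ g`, which is `1`.
-/

/-- `y_i(t) = I + t E_{i+1,i}` in `SL_{n+1}(ℂ)` (rows and columns of matrices are
indexed by `Fin (n+1)`; the letter `i` ranges over `0,…,n-1`, corresponding to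
the 1-based index `i+1 ∈ {1,…,n}`). Junk value `I` for `i ≥ n`. -/
noncomputable def ymat (n : ℕ) (i : ℕ) (t : ℂ) : Matrix (Fin (n + 1)) (Fin (n + 1)) ℂ :=
  if h : i < n then 1 + Matrix.single ⟨i + 1, by omega⟩ ⟨i, by omega⟩ t else 1

/-- `x_i(t) = I + t E_{i,i+1}`. Junk value `I` for `i ≥ n`. -/
noncomputable def xmat (n : ℕ) (i : ℕ) (t : ℂ) : Matrix (Fin (n + 1)) (Fin (n + 1)) ℂ :=
  if h : i < n then 1 + Matrix.single ⟨i, by omega⟩ ⟨i + 1, by omega⟩ t else 1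

/-- `α_i^∨(s)`: the diagonal matrix with `s` at position `i`, `s⁻¹` at position
`i+1`, and `1` elsewhere. -/
noncomputable def avmat (n : ℕ) (i : ℕ) (s : ℂ) : Matrix (Fin (n + 1)) (Fin (n + 1)) ℂ :=
  Matrix.diagonal (fun j => if (j : ℕ) = i then s else if (j : ℕ) = i + 1 then s⁻¹ else 1)

/-- `s̄_i = x_i(−1) y_i(1) x_i(−1)`. -/
noncomputable def sbar (n : ℕ) (i : ℕ) : Matrix (Fin (n + 1)) (Fin (n + 1)) ℂ :=
  xmat n i (-1) * ymat n i 1 * xmat n i (-1)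

/-- `Θ_ι(c) = y_{i_1}(c_1) α_{i_1}^∨(c_1⁻¹) ⋯ y_{i_k}(c_k) α_{i_k}^∨(c_k⁻¹)`. -/
noncomputable def theta (n : ℕ) {k : ℕ} (ι : Fin k → ℕ) (c : Fin k → ℂ) :
    Matrix (Fin (n + 1)) (Fin (n + 1)) ℂ :=
  (List.ofFn (fun m => ymat n (ι m) (c m) * avmat n (ι m) (c m)⁻¹)).prod

/-- `w̄ = s̄_{i_1} ⋯ s̄_{i_k}` for a word `ι`. -/
noncomputable def wbar (n : ℕ) {k : ℕ} (ι : Fin k → ℕ) : Matrix (Fin (n + 1)) (Fin (n + 1)) ℂ :=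
  (List.ofFn (fun m => sbar n (ι m))).prod

/-- The determinant of the upper-left `i×i` submatrix of `M` (junk value `0` if
`i > n+1`). -/
noncomputable def ulMinor {n : ℕ} (M : Matrix (Fin (n + 1)) (Fin (n + 1)) ℂ) (i : ℕ) : ℂ :=
  if h : i ≤ n + 1 then
    (M.submatrix (Fin.castLE h) (Fin.castLE h) : Matrix (Fin i) (Fin i) ℂ).det
  else 0

/-- The adjacent transposition `s_i = (i, i+1)` of `S_{n+1}` (1-based
`(i+1, i+2)`); junk value `1` for `i ≥ n`. -/
noncomputable def sperm (n : ℕ) (i : ℕ) : Equiv.Perm (Fin (n + 1)) :=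
  if h : i < n then Equiv.swap ⟨i, by omega⟩ ⟨i + 1, by omega⟩ else 1

open Matrix Finset

namespace Matrix

section Unitriangular

variable {m R : Type*} [LinearOrder m] [CommRing R]

def IsUpperUnitriangular (M : Matrix m m R) : Prop :=
  M.IsUpperTriangular ∧ ∀ k, M k k = 1

def IsLowerUnitriangular (M : Matrix m m R) : Prop :=
  M.IsLowerTriangular ∧ ∀ k, M k k = 1

theorem isUpperUnitriangular_one [DecidableEq m] :
    IsUpperUnitriangular (1 : Matrix m m R) :=
  ⟨blockTriangular_one, fun _ => one_apply_eq _⟩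

theorem IsUpperUnitriangular.mul [Fintype m] {A B : Matrix m m R}
    (hA : IsUpperUnitriangular A) (hB : IsUpperUnitriangular B) :
    IsUpperUnitriangular (A * B) := by
  refine ⟨hA.1.mul hB.1, fun k => ?_⟩
  rw [mul_apply, Finset.sum_eq_single k (fun p _ hpk => ?_) (by simp), hA.2, hB.2, one_mul]
  rcases hpk.lt_or_gt with hp | hp
  · rw [hA.1 hp, zero_mul]
  · rw [hB.1 hp, mul_zero]

theorem IsUpperUnitriangular.submatrix {l : Type*} [LinearOrder l] {M : Matrix m m R}
    (hM : IsUpperUnitriangular M) {f : l → m} (hf : StrictMono f) :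
    IsUpperUnitriangular (M.submatrix f f) :=
  ⟨fun _ _ h => hM.1 (hf h), fun _ => hM.2 _⟩

theorem IsLowerUnitriangular.submatrix {l : Type*} [LinearOrder l] {M : Matrix m m R}
    (hM : IsLowerUnitriangular M) {f : l → m} (hf : StrictMono f) :
    IsLowerUnitriangular (M.submatrix f f) :=
  ⟨fun _ _ h => hM.1 (show f _ < f _ from hf h), fun _ => hM.2 _⟩

theorem IsUpperUnitriangular.det_eq_one [Fintype m] {M : Matrix m m R}
    (hM : IsUpperUnitriangular M) : M.det = 1 := by
  simp [det_of_isUpperTriangular hM.1, hM.2]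

theorem IsLowerUnitriangular.det_eq_one [Fintype m] {M : Matrix m m R}
    (hM : IsLowerUnitriangular M) : M.det = 1 := by
  simp [det_of_isLowerTriangular M hM.1, hM.2]

end Unitriangular

section Single

variable {m R : Type*} [Fintype m] [DecidableEq m] [Semiring R]

theorem single_mul_apply (a b : m) (t : R) (M : Matrix m m R) (k l : m) :
    (single a b t * M) k l = if k = a then t * M b l else 0 := by
  split_ifs with h
  · rw [h, single_mul_apply_same]
  · exact single_mul_apply_of_ne _ _ _ _ _ h M

theorem mul_single_apply (a b : m) (t : R) (M : Matrix m m R) (k l : m) :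
    (M * single a b t) k l = if l = b then M k a * t else 0 := by
  split_ifs with h
  · rw [h, mul_single_apply_same]
  · exact mul_single_apply_of_ne _ _ _ _ _ h M

end Single

section SignedPermutation

variable {m K : Type*} [DecidableEq m] [Field K]

def signedPermMatrix (σ : Equiv.Perm m) (d : m → K) : Matrix m m K :=
  of fun k l => if k = σ l then d l else 0

theorem signedPermMatrix_apply (σ : Equiv.Perm m) (d : m → K) (k l : m) :
    signedPermMatrix σ d k l = if k = σ l then d l else 0 := rfl

theorem signedPermMatrix_one : signedPermMatrix (1 : Equiv.Perm m) (fun _ => (1 : K)) = 1 := by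
  ext k l
  by_cases h : k = l <;> simp [signedPermMatrix_apply, one_apply, h]

variable [Fintype m]

theorem mul_signedPermMatrix_apply (M : Matrix m m K) (σ : Equiv.Perm m) (d : m → K) (k l : m) :
    (M * signedPermMatrix σ d) k l = M k (σ l) * d l := by
  simp [mul_apply, signedPermMatrix_apply]

theorem signedPermMatrix_mul_apply (σ : Equiv.Perm m) (d : m → K) (M : Matrix m m K) (k l : m) :
    (signedPermMatrix σ d * M) k l = d (σ⁻¹ k) * M (σ⁻¹ k) l := by
  rw [mul_apply, Finset.sum_eq_single (σ⁻¹ k)]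
  · simp [signedPermMatrix_apply]
  · intro p _ hp
    rw [signedPermMatrix_apply, if_neg (fun h => hp (by simp [h])), zero_mul]
  · simp

theorem signedPermMatrix_mul_signedPermMatrix (σ τ : Equiv.Perm m) (d e : m → K) :
    signedPermMatrix σ d * signedPermMatrix τ e
      = signedPermMatrix (σ * τ) (fun l => d (τ l) * e l) := by
  ext k l
  rw [mul_signedPermMatrix_apply, signedPermMatrix_apply, signedPermMatrix_apply,
    Equiv.Perm.mul_apply]
  split_ifs <;> simp [mul_comm]

theorem signedPermMatrix_inv_mul_signedPermMatrix {σ : Equiv.Perm m} {d : m → K}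
    (hd : ∀ l, d l ≠ 0) :
    signedPermMatrix σ⁻¹ (fun k => (d (σ⁻¹ k))⁻¹) * signedPermMatrix σ d = 1 := by
  rw [signedPermMatrix_mul_signedPermMatrix, inv_mul_cancel, ← signedPermMatrix_one]
  congr 1
  funext l
  simp [hd]

theorem inv_signedPermMatrix {σ : Equiv.Perm m} {d : m → K} (hd : ∀ l, d l ≠ 0) :
    (signedPermMatrix σ d)⁻¹ = signedPermMatrix σ⁻¹ (fun k => (d (σ⁻¹ k))⁻¹) :=
  inv_eq_left_inv (signedPermMatrix_inv_mul_signedPermMatrix hd)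

theorem isUnit_det_signedPermMatrix {σ : Equiv.Perm m} {d : m → K} (hd : ∀ l, d l ≠ 0) :
    IsUnit (signedPermMatrix σ d).det :=
  isUnit_det_of_left_inverse (signedPermMatrix_inv_mul_signedPermMatrix hd)

theorem inv_signedPermMatrix_mul_mul_apply {σ : Equiv.Perm m} {d : m → K} (hd : ∀ l, d l ≠ 0)
    (u : Matrix m m K) (k l : m) :
    ((signedPermMatrix σ d)⁻¹ * u * signedPermMatrix σ d) k l = u (σ k) (σ l) * d l / d k := by
  rw [mul_signedPermMatrix_apply, inv_signedPermMatrix hd, signedPermMatrix_mul_apply]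
  simp only [inv_inv, Equiv.Perm.coe_inv, Equiv.symm_apply_apply, div_eq_mul_inv]
  ring

variable [LinearOrder m]

theorem isUpperUnitriangular_inv_signedPermMatrix_mul_mul {σ : Equiv.Perm m} {d : m → K}
    (hd : ∀ l, d l ≠ 0) {u : Matrix m m K} (hu : ∀ k, u k k = 1)
    (h : ∀ ⦃k l⦄, l < k → u (σ k) (σ l) = 0) :
    IsUpperUnitriangular ((signedPermMatrix σ d)⁻¹ * u * signedPermMatrix σ d) := by
  refine ⟨fun k l hlk => ?_, fun k => ?_⟩
  · simp [inv_signedPermMatrix_mul_mul_apply hd, h (show l < k from hlk)]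
  · simp [inv_signedPermMatrix_mul_mul_apply hd, hu, hd]

theorem isLowerUnitriangular_inv_signedPermMatrix_mul_mul {σ : Equiv.Perm m} {d : m → K}
    (hd : ∀ l, d l ≠ 0) {u : Matrix m m K} (hu : ∀ k, u k k = 1)
    (h : ∀ ⦃k l⦄, k < l → u (σ k) (σ l) = 0) :
    IsLowerUnitriangular ((signedPermMatrix σ d)⁻¹ * u * signedPermMatrix σ d) := by
  refine ⟨fun k l hkl => ?_, fun k => ?_⟩
  · simp [inv_signedPermMatrix_mul_mul_apply hd, h (show k < l from hkl)]
  · simp [inv_signedPermMatrix_mul_mul_apply hd, hu, hd]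

end SignedPermutation

end Matrix

namespace Equiv.Perm

variable {α : Type*} [Fintype α] [LinearOrder α]

-- The Coxeter length; a word `ι : Fin k → ℕ` is reduced iff `(wordPerm n ι).numInversions = k`.
def numInversions (σ : Perm α) : ℕ :=
  #{p : α × α | p.1 < p.2 ∧ σ p.2 < σ p.1}

theorem numInversions_one : numInversions (1 : Perm α) = 0 := by
  rw [numInversions, card_eq_zero, filter_eq_empty_iff]
  exact fun p _ h => h.1.asymm h.2

omit [Fintype α] in
theorem swap_apply_lt_swap_apply_iff {x y p q : α} (hxy : x ⋖ y)
    (h : ¬(p = x ∧ q = y)) (h' : ¬(p = y ∧ q = x)) :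
    swap x y p < swap x y q ↔ p < q := by
  have h1 : ∀ z, x < z ↔ y ≤ z := fun z => ⟨hxy.ge_of_gt, hxy.lt.trans_le⟩
  have h2 : ∀ z, z < y ↔ z ≤ x := fun z => ⟨hxy.le_of_lt, fun hz => hz.trans_lt hxy.lt⟩
  rw [swap_apply_def, swap_apply_def]
  split_ifs <;> grind

theorem numInversions_mul_swap_of_lt {σ : Perm α} {x y : α} (hxy : x ⋖ y) (h : σ x < σ y) :
    numInversions (σ * swap x y) = numInversions σ + 1 := by
  have hreindex : numInversions (σ * swap x y)
      = #{p : α × α | swap x y p.1 < swap x y p.2 ∧ σ p.2 < σ p.1} := by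
    refine card_equiv ((swap x y).prodCongr (swap x y)) fun p => ?_
    rw [mem_filter, mem_filter]
    simp only [mem_univ, true_and, mul_apply, prodCongr_apply, Prod.map_fst, Prod.map_snd,
      swap_apply_self]
  have hnew : (y, x) ∉ ({p | p.1 < p.2 ∧ σ p.2 < σ p.1} : Finset (α × α)) := by
    simp [hxy.lt.asymm]
  rw [hreindex, numInversions, ← card_insert_of_notMem hnew]
  congr 1
  ext ⟨p, q⟩
  by_cases hpq : p = x ∧ q = y
  · simp [hpq, h.asymm, hxy.lt.ne']
  by_cases hqp : p = y ∧ q = x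
  · simp [hqp, hxy.lt, h]
  simp [swap_apply_lt_swap_apply_iff hxy hpq hqp, hqp]

theorem numInversions_mul_swap_of_gt {σ : Perm α} {x y : α} (hxy : x ⋖ y) (h : σ y < σ x) :
    numInversions σ = numInversions (σ * swap x y) + 1 := by
  have h' : (σ * swap x y) x < (σ * swap x y) y := by simpa using h
  simpa [mul_assoc] using numInversions_mul_swap_of_lt hxy h'

theorem numInversions_revPerm (m : ℕ) :
    numInversions (Fin.revPerm : Perm (Fin m)) = m * (m - 1) / 2 := by
  have hfilter : ({p | p.1 < p.2 ∧ Fin.revPerm p.2 < Fin.revPerm p.1} : Finset (Fin m × Fin m))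
      = ({p | p.1 < p.2} : Finset (Fin m × Fin m)) := by
    ext p
    simp [Fin.rev_lt_rev]
  rw [numInversions, hfilter, card_filter, Fintype.sum_prod_type_right]
  have hrow : ∀ q : Fin m, (∑ p : Fin m, if p < q then 1 else 0) = (q : ℕ) := by
    intro q
    rw [← card_filter, filter_gt_eq_Iio, Fin.card_Iio]
  simp only [hrow]
  rw [Fin.sum_univ_eq_sum_range (fun q => q), sum_range_id]

end Equiv.Perm

theorem List.prod_ofFn_succ' {M : Type*} [Monoid M] {k : ℕ} (f : Fin (k + 1) → M) :
    (List.ofFn f).prod = (List.ofFn fun m => f m.castSucc).prod * f (Fin.last k) := by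
  rw [List.ofFn_succ', List.prod_concat]

theorem Fin.sum_eq_sum_castLE_of_eq_zero {M : Type*} [AddCommMonoid M] {m j : ℕ} (h : j ≤ m)
    (F : Fin m → M) (hF : ∀ p : Fin m, j ≤ p → F p = 0) :
    ∑ p, F p = ∑ q : Fin j, F (Fin.castLE h q) := by
  refine Eq.trans ?_ (Finset.sum_map _ (Fin.castLEEmb h) F)
  refine (Finset.sum_subset (Finset.subset_univ _) fun p _ hp => hF p ?_).symm
  by_contra! hpj
  exact hp (Finset.mem_map.2 ⟨⟨p, hpj⟩, Finset.mem_univ _, rfl⟩)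

theorem submatrix_castLE_mul_of_isLowerTriangular {R : Type*} [Semiring R] {m j : ℕ} (h : j ≤ m)
    {L : Matrix (Fin m) (Fin m) R} (hL : L.IsLowerTriangular)
    (M : Matrix (Fin m) (Fin m) R) :
    (L * M).submatrix (Fin.castLE h) (Fin.castLE h)
      = L.submatrix (Fin.castLE h) (Fin.castLE h) * M.submatrix (Fin.castLE h) (Fin.castLE h) := by
  ext k l
  refine Fin.sum_eq_sum_castLE_of_eq_zero h _ fun p hp => ?_
  have hkp : Fin.castLE h k < p := Fin.lt_def.2 (lt_of_lt_of_le k.isLt hp)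
  exact mul_eq_zero_of_left (hL hkp) _

theorem submatrix_castLE_mul_of_isUpperTriangular {R : Type*} [Semiring R] {m j : ℕ} (h : j ≤ m)
    (M : Matrix (Fin m) (Fin m) R)
    {U : Matrix (Fin m) (Fin m) R} (hU : U.IsUpperTriangular) :
    (M * U).submatrix (Fin.castLE h) (Fin.castLE h)
      = M.submatrix (Fin.castLE h) (Fin.castLE h) * U.submatrix (Fin.castLE h) (Fin.castLE h) := by
  ext k l
  refine Fin.sum_eq_sum_castLE_of_eq_zero h _ fun p hp => ?_
  have hlp : Fin.castLE h l < p := Fin.lt_def.2 (lt_of_lt_of_le l.isLt hp)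
  exact mul_eq_zero_of_right _ (hU hlp)

section LeadingMinors

variable {n : ℕ}

theorem ulMinor_mul_of_isLowerUnitriangular {L : Matrix (Fin (n + 1)) (Fin (n + 1)) ℂ}
    (hL : L.IsLowerUnitriangular) (M : Matrix (Fin (n + 1)) (Fin (n + 1)) ℂ) (j : ℕ) :
    ulMinor (L * M) j = ulMinor M j := by
  unfold ulMinor
  split_ifs with h
  · rw [submatrix_castLE_mul_of_isLowerTriangular h hL.1, det_mul,
      (hL.submatrix (Fin.strictMono_castLE h)).det_eq_one, one_mul]
  · rfl

theorem ulMinor_mul_of_isUpperUnitriangular (M : Matrix (Fin (n + 1)) (Fin (n + 1)) ℂ)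
    {U : Matrix (Fin (n + 1)) (Fin (n + 1)) ℂ} (hU : U.IsUpperUnitriangular) (j : ℕ) :
    ulMinor (M * U) j = ulMinor M j := by
  unfold ulMinor
  split_ifs with h
  · rw [submatrix_castLE_mul_of_isUpperTriangular h M hU.1, det_mul,
      (hU.submatrix (Fin.strictMono_castLE h)).det_eq_one, mul_one]
  · rfl

theorem ulMinor_of_isUpperUnitriangular {U : Matrix (Fin (n + 1)) (Fin (n + 1)) ℂ}
    (hU : U.IsUpperUnitriangular) {j : ℕ} (hj : j ≤ n + 1) : ulMinor U j = 1 := by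
  rw [ulMinor, dif_pos hj, (hU.submatrix (Fin.strictMono_castLE hj)).det_eq_one]

end LeadingMinors

section Words

variable {n : ℕ}

noncomputable def wordPerm (n : ℕ) {k : ℕ} (ι : Fin k → ℕ) : Equiv.Perm (Fin (n + 1)) :=
  (List.ofFn fun m => sperm n (ι m)).prod

theorem wordPerm_succ {k : ℕ} (ι : Fin (k + 1) → ℕ) :
    wordPerm n ι = wordPerm n (fun m => ι m.castSucc) * sperm n (ι (Fin.last k)) :=
  List.prod_ofFn_succ' _

theorem sperm_of_lt {a : ℕ} (ha : a < n) :
    sperm n a = Equiv.swap ⟨a, by omega⟩ ⟨a + 1, by omega⟩ := dif_pos ha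

theorem Fin.mk_covBy_mk_add_one {a : ℕ} (ha : a < n) :
    (⟨a, by omega⟩ : Fin (n + 1)) ⋖ ⟨a + 1, by omega⟩ :=
  Fin.covBy_iff.2 (Nat.covBy_iff_add_one_eq.2 rfl)

theorem numInversions_wordPerm_le {k : ℕ} (ι : Fin k → ℕ) :
    (wordPerm n ι).numInversions ≤ k := by
  induction k with
  | zero => simp [wordPerm, Equiv.Perm.numInversions_one]
  | succ k ih =>
    specialize ih fun m => ι m.castSucc
    rw [wordPerm_succ]
    by_cases ha : ι (Fin.last k) < n
    · have hxy := Fin.mk_covBy_mk_add_one ha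
      rw [sperm_of_lt ha]
      set σ := wordPerm n fun m => ι m.castSucc
      rcases lt_or_gt_of_ne (σ.injective.ne (Fin.ne_of_lt hxy.lt)) with h | h
      · rw [Equiv.Perm.numInversions_mul_swap_of_lt hxy h]
        omega
      · have := Equiv.Perm.numInversions_mul_swap_of_gt hxy h
        omega
    · rw [sperm, dif_neg ha, mul_one]
      omega

theorem numInversions_wordPerm_init {k : ℕ} {ι : Fin (k + 1) → ℕ}
    (hι : (wordPerm n ι).numInversions = k + 1) (ha : ι (Fin.last k) < n) :
    (wordPerm n fun m => ι m.castSucc).numInversions = k ∧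
      wordPerm n (fun m => ι m.castSucc) ⟨ι (Fin.last k), by omega⟩
        < wordPerm n (fun m => ι m.castSucc) ⟨ι (Fin.last k) + 1, by omega⟩ := by
  have hxy := Fin.mk_covBy_mk_add_one ha
  rw [wordPerm_succ, sperm_of_lt ha] at hι
  have hle := numInversions_wordPerm_le (n := n) fun m => ι m.castSucc
  set σ := wordPerm n fun m => ι m.castSucc
  rcases lt_or_gt_of_ne (σ.injective.ne (Fin.ne_of_lt hxy.lt)) with h | h
  · rw [Equiv.Perm.numInversions_mul_swap_of_lt hxy h] at hι
    exact ⟨by omega, h⟩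
  · have := Equiv.Perm.numInversions_mul_swap_of_gt hxy h
    omega

end Words

section Generators

variable {n : ℕ}

theorem xmat_of_lt {a : ℕ} (ha : a < n) (t : ℂ) :
    xmat n a t = 1 + single ⟨a, by omega⟩ ⟨a + 1, by omega⟩ t := dif_pos ha

theorem ymat_of_lt {a : ℕ} (ha : a < n) (t : ℂ) :
    ymat n a t = 1 + single ⟨a + 1, by omega⟩ ⟨a, by omega⟩ t := dif_pos ha

theorem xmat_mul_apply {a : ℕ} (ha : a < n) (t : ℂ) (M : Matrix (Fin (n + 1)) (Fin (n + 1)) ℂ)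
    (k l : Fin (n + 1)) :
    (xmat n a t * M) k l = M k l + if (k : ℕ) = a then t * M ⟨a + 1, by omega⟩ l else 0 := by
  simp [xmat_of_lt ha, add_mul, single_mul_apply, Fin.ext_iff]

theorem mul_xmat_apply {a : ℕ} (ha : a < n) (t : ℂ) (M : Matrix (Fin (n + 1)) (Fin (n + 1)) ℂ)
    (k l : Fin (n + 1)) :
    (M * xmat n a t) k l = M k l + if (l : ℕ) = a + 1 then M k ⟨a, by omega⟩ * t else 0 := by
  simp [xmat_of_lt ha, mul_add, mul_single_apply, Fin.ext_iff]

theorem mul_ymat_apply {a : ℕ} (ha : a < n) (t : ℂ) (M : Matrix (Fin (n + 1)) (Fin (n + 1)) ℂ)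
    (k l : Fin (n + 1)) :
    (M * ymat n a t) k l = M k l + if (l : ℕ) = a then M k ⟨a + 1, by omega⟩ * t else 0 := by
  simp [ymat_of_lt ha, mul_add, mul_single_apply, Fin.ext_iff]

theorem xmat_apply {a : ℕ} (ha : a < n) (t : ℂ) (k l : Fin (n + 1)) :
    xmat n a t k l = (if k = l then 1 else 0) + if (k : ℕ) = a ∧ (l : ℕ) = a + 1 then t else 0 := by
  simp [xmat_of_lt ha, one_apply, single_apply, Fin.ext_iff, eq_comm]

theorem ymat_apply {a : ℕ} (ha : a < n) (t : ℂ) (k l : Fin (n + 1)) :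
    ymat n a t k l = (if k = l then 1 else 0) + if (k : ℕ) = a + 1 ∧ (l : ℕ) = a then t else 0 := by
  simp [ymat_of_lt ha, one_apply, single_apply, Fin.ext_iff, eq_comm]

noncomputable def sbarSign (a : ℕ) : Fin (n + 1) → ℂ :=
  fun l => if (l : ℕ) = a + 1 then -1 else 1

theorem sbar_eq_signedPermMatrix {a : ℕ} (ha : a < n) :
    sbar n a = signedPermMatrix (sperm n a) (sbarSign a) := by
  ext k l
  rw [sbar, mul_xmat_apply ha, mul_ymat_apply ha, mul_ymat_apply ha, signedPermMatrix_apply,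
    sperm_of_lt ha, Equiv.swap_apply_def]
  simp only [xmat_apply ha, sbarSign, Fin.ext_iff, and_true]
  split_ifs <;> first | omega | norm_num

theorem ymat_mul_avmat {a : ℕ} (ha : a < n) {c : ℂ} (hc : c ≠ 0) :
    ymat n a c * avmat n a c⁻¹ = xmat n a c⁻¹ * sbar n a * xmat n a c := by
  ext k l
  rw [avmat, mul_diagonal, mul_xmat_apply ha, xmat_mul_apply ha, xmat_mul_apply ha,
    sbar_eq_signedPermMatrix ha]
  simp only [ymat_apply ha, signedPermMatrix_apply, sperm_of_lt ha, Equiv.swap_apply_def, sbarSign,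
    Fin.ext_iff]
  -- `dsimp` reduces the `Fin.val ⟨_, _⟩` left by `split_ifs`, which `omega` cannot see through.
  split_ifs <;> (try dsimp only at *) <;> first | omega | (field_simp; ring1)

theorem xmat_mul_sbar {a : ℕ} (ha : a < n) (b : ℂ) :
    xmat n a b * sbar n a = sbar n a * ymat n a (-b) := by
  ext k l
  rw [xmat_mul_apply ha, mul_ymat_apply ha, sbar_eq_signedPermMatrix ha]
  simp only [signedPermMatrix_apply, sperm_of_lt ha, Equiv.swap_apply_def, sbarSign, Fin.ext_iff]
  split_ifs <;> (try dsimp only at *) <;> first | omega | ring1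

theorem isUpperUnitriangular_xmat (a : ℕ) (t : ℂ) : (xmat n a t).IsUpperUnitriangular := by
  by_cases ha : a < n
  · refine ⟨fun k l hlk => ?_, fun k => ?_⟩ <;> rw [xmat_apply ha]
    · have hlk : (l : ℕ) < k := hlk
      rw [if_neg (Fin.ne_of_gt hlk), if_neg (by omega), add_zero]
    · rw [if_pos rfl, if_neg (by omega), add_zero]
  · simp only [xmat, dif_neg ha]
    exact isUpperUnitriangular_one

theorem xmat_mul_xmat (a : ℕ) (t s : ℂ) : xmat n a t * xmat n a s = xmat n a (t + s) := by
  by_cases ha : a < n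
  · ext k l
    rw [mul_xmat_apply ha]
    simp only [xmat_apply ha, Fin.ext_iff]
    split_ifs <;> first | omega | ring1
  · simp [xmat, dif_neg ha]

theorem xmat_zero (a : ℕ) : xmat n a 0 = 1 := by
  by_cases ha : a < n <;> simp [xmat, ha]

theorem sbarSign_ne_zero (a : ℕ) (l : Fin (n + 1)) : sbarSign a l ≠ 0 := by
  unfold sbarSign
  split_ifs <;> norm_num

-- `s_a` permutes the positive roots other than `α_a`, which it sends to `-α_a`.
theorem isUpperUnitriangular_sbar_inv_mul_mul {a : ℕ} (ha : a < n)
    {u : Matrix (Fin (n + 1)) (Fin (n + 1)) ℂ} (hu : u.IsUpperUnitriangular)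
    (h0 : u ⟨a, by omega⟩ ⟨a + 1, by omega⟩ = 0) :
    ((sbar n a)⁻¹ * u * sbar n a).IsUpperUnitriangular := by
  rw [sbar_eq_signedPermMatrix ha]
  refine isUpperUnitriangular_inv_signedPermMatrix_mul_mul (sbarSign_ne_zero a) hu.2
    fun k l hlk => ?_
  rw [sperm_of_lt ha]
  by_cases hxy : l = ⟨a, by omega⟩ ∧ k = ⟨a + 1, by omega⟩
  · simpa [hxy.1, hxy.2] using h0
  by_cases hyx : l = ⟨a + 1, by omega⟩ ∧ k = ⟨a, by omega⟩
  · exact absurd hlk (by simp [hyx.1, hyx.2, Fin.lt_def])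
  exact hu.1 ((Equiv.Perm.swap_apply_lt_swap_apply_iff (Fin.mk_covBy_mk_add_one ha) hxy hyx).2 hlk)

theorem exists_mul_sbar_eq_sbar_mul {a : ℕ} (ha : a < n)
    {u : Matrix (Fin (n + 1)) (Fin (n + 1)) ℂ} (hu : u.IsUpperUnitriangular)
    (h0 : u ⟨a, by omega⟩ ⟨a + 1, by omega⟩ = 0) :
    ∃ u', u'.IsUpperUnitriangular ∧ u * sbar n a = sbar n a * u' := by
  refine ⟨_, isUpperUnitriangular_sbar_inv_mul_mul ha hu h0, ?_⟩
  have hunit : IsUnit (sbar n a).det := by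
    rw [sbar_eq_signedPermMatrix ha]
    exact isUnit_det_signedPermMatrix (sbarSign_ne_zero a)
  rw [← Matrix.mul_assoc, ← Matrix.mul_assoc, mul_nonsing_inv _ hunit, Matrix.one_mul]

end Generators

section Bruhat

variable {n : ℕ}

theorem theta_succ {k : ℕ} (ι : Fin (k + 1) → ℕ) (c : Fin (k + 1) → ℂ) :
    theta n ι c = theta n (fun m => ι m.castSucc) (fun m => c m.castSucc)
      * (ymat n (ι (Fin.last k)) (c (Fin.last k)) * avmat n (ι (Fin.last k)) (c (Fin.last k))⁻¹) :=
  List.prod_ofFn_succ' _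

theorem wbar_succ {k : ℕ} (ι : Fin (k + 1) → ℕ) :
    wbar n ι = wbar n (fun m => ι m.castSucc) * sbar n (ι (Fin.last k)) :=
  List.prod_ofFn_succ' _

theorem wbar_eq_signedPermMatrix {k : ℕ} {ι : Fin k → ℕ} (hι : ∀ m, ι m < n) :
    ∃ d : Fin (n + 1) → ℂ, (∀ l, d l ≠ 0) ∧ wbar n ι = signedPermMatrix (wordPerm n ι) d := by
  induction k with
  | zero => exact ⟨fun _ => 1, fun _ => one_ne_zero, signedPermMatrix_one.symm⟩
  | succ k ih =>
    obtain ⟨d, hd, hW⟩ := ih fun m => hι m.castSucc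
    refine ⟨fun l => d (sperm n (ι (Fin.last k)) l) * sbarSign (ι (Fin.last k)) l,
      fun l => mul_ne_zero (hd _) (sbarSign_ne_zero _ l), ?_⟩
    rw [wbar_succ, wordPerm_succ, hW, sbar_eq_signedPermMatrix (hι _),
      signedPermMatrix_mul_signedPermMatrix]

theorem exists_signedPermMatrix_mul_xmat_eq {a : ℕ} (ha : a < n) (t : ℂ)
    {σ : Equiv.Perm (Fin (n + 1))} {d : Fin (n + 1) → ℂ} (hd : ∀ l, d l ≠ 0)
    (hσ : σ ⟨a, by omega⟩ < σ ⟨a + 1, by omega⟩) :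
    ∃ X, X.IsUpperUnitriangular ∧
      signedPermMatrix σ d * xmat n a t = X * signedPermMatrix σ d := by
  set P := signedPermMatrix σ d
  have hP : IsUnit P.det := isUnit_det_signedPermMatrix hd
  refine ⟨P * xmat n a t * P⁻¹, ?_, by
    rw [Matrix.mul_assoc _ P⁻¹, nonsing_inv_mul _ hP, Matrix.mul_one]⟩
  nth_rewrite 1 [← nonsing_inv_nonsing_inv P hP]
  rw [inv_signedPermMatrix hd]
  refine isUpperUnitriangular_inv_signedPermMatrix_mul_mul (fun l => inv_ne_zero (hd _))
    (isUpperUnitriangular_xmat a t).2 fun k l hlk => ?_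
  rw [xmat_apply ha, if_neg (σ⁻¹.injective.ne (Fin.ne_of_gt hlk)), zero_add, ite_eq_right_iff]
  rintro ⟨hk, hl⟩
  have hk : σ⁻¹ k = ⟨a, by omega⟩ := Fin.ext hk
  have hl : σ⁻¹ l = ⟨a + 1, by omega⟩ := Fin.ext hl
  rw [Equiv.Perm.inv_eq_iff_eq] at hk hl
  rw [← hk, ← hl] at hσ
  exact absurd hσ hlk.not_gt

theorem exists_xmat_mul_eq {a : ℕ} (ha : a < n) {u : Matrix (Fin (n + 1)) (Fin (n + 1)) ℂ}
    (hu : u.IsUpperUnitriangular) :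
    ∃ t u₀, u₀.IsUpperUnitriangular ∧ u₀ ⟨a, by omega⟩ ⟨a + 1, by omega⟩ = 0 ∧
      u = xmat n a t * u₀ := by
  set t := u ⟨a, by omega⟩ ⟨a + 1, by omega⟩
  refine ⟨t, xmat n a (-t) * u, (isUpperUnitriangular_xmat a _).mul hu, ?_, ?_⟩
  · simp [xmat_mul_apply ha, hu.2, t]
  · rw [← Matrix.mul_assoc, xmat_mul_xmat, add_neg_cancel, xmat_zero, Matrix.one_mul]

theorem exists_bruhat_step {a : ℕ} (ha : a < n) {c : ℂ} (hc : c ≠ 0)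
    {σ : Equiv.Perm (Fin (n + 1))} {d : Fin (n + 1) → ℂ} (hd : ∀ l, d l ≠ 0)
    (hσ : σ ⟨a, by omega⟩ < σ ⟨a + 1, by omega⟩)
    {nL nR : Matrix (Fin (n + 1)) (Fin (n + 1)) ℂ} (hnL : nL.IsUpperUnitriangular)
    (hnR : nR.IsUpperUnitriangular) :
    ∃ nL' nR', nL'.IsUpperUnitriangular ∧ nR'.IsUpperUnitriangular ∧
      nL * signedPermMatrix σ d * nR * (ymat n a c * avmat n a c⁻¹)
        = nL' * (signedPermMatrix σ d * sbar n a) * nR' := by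
  obtain ⟨t, u₀, hu₀, hu₀0, hsplit⟩ :=
    exists_xmat_mul_eq ha (hnR.mul (isUpperUnitriangular_xmat a c⁻¹))
  obtain ⟨X, hX, hPX⟩ := exists_signedPermMatrix_mul_xmat_eq ha t hd hσ
  obtain ⟨u', hu', hu₀s⟩ := exists_mul_sbar_eq_sbar_mul ha hu₀ hu₀0
  refine ⟨nL * X, u' * xmat n a c, hnL.mul hX, hu'.mul (isUpperUnitriangular_xmat a c), ?_⟩
  calc nL * signedPermMatrix σ d * nR * (ymat n a c * avmat n a c⁻¹)
      = nL * signedPermMatrix σ d * (nR * xmat n a c⁻¹) * sbar n a * xmat n a c := by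
        rw [ymat_mul_avmat ha hc]
        simp only [Matrix.mul_assoc]
    _ = nL * (signedPermMatrix σ d * xmat n a t) * (u₀ * sbar n a) * xmat n a c := by
        rw [hsplit]
        simp only [Matrix.mul_assoc]
    _ = nL * X * (signedPermMatrix σ d * sbar n a) * (u' * xmat n a c) := by
        rw [hPX, hu₀s]
        simp only [Matrix.mul_assoc]

theorem exists_theta_eq_mul_wbar_mul {k : ℕ} {ι : Fin k → ℕ} {c : Fin k → ℂ}
    (hι : ∀ m, ι m < n) (hc : ∀ m, c m ≠ 0) (hred : (wordPerm n ι).numInversions = k) :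
    ∃ nL nR, nL.IsUpperUnitriangular ∧ nR.IsUpperUnitriangular ∧
      theta n ι c = nL * wbar n ι * nR := by
  induction k with
  | zero => exact ⟨1, 1, isUpperUnitriangular_one, isUpperUnitriangular_one, by simp [theta, wbar]⟩
  | succ k ih =>
    obtain ⟨hred', hσ⟩ := numInversions_wordPerm_init hred (hι _)
    obtain ⟨nL, nR, hnL, hnR, hθ⟩ := ih (fun m => hι m.castSucc) (fun m => hc m.castSucc) hred'
    obtain ⟨d, hd, hW⟩ := wbar_eq_signedPermMatrix fun m => hι m.castSucc
    obtain ⟨nL', nR', hnL', hnR', hstep⟩ :=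
      exists_bruhat_step (hι _) (hc (Fin.last k)) hd hσ hnL hnR
    refine ⟨nL', nR', hnL', hnR', ?_⟩
    rw [theta_succ, hθ, hW, hstep, wbar_succ, hW]

theorem isLowerUnitriangular_revPerm_conj {d : Fin (n + 1) → ℂ} (hd : ∀ l, d l ≠ 0)
    {u : Matrix (Fin (n + 1)) (Fin (n + 1)) ℂ} (hu : u.IsUpperUnitriangular) :
    IsLowerUnitriangular
      ((signedPermMatrix Fin.revPerm d)⁻¹ * u * signedPermMatrix Fin.revPerm d) :=
  isLowerUnitriangular_inv_signedPermMatrix_mul_mul hd hu.2 fun _ _ hkl =>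
    hu.1 (by simpa [Fin.rev_lt_rev] using hkl)

theorem exists_inv_signedPermMatrix_revPerm_mul_eq {d : Fin (n + 1) → ℂ} (hd : ∀ l, d l ≠ 0)
    {u : Matrix (Fin (n + 1)) (Fin (n + 1)) ℂ} (hu : u.IsUpperUnitriangular) :
    ∃ L, L.IsLowerUnitriangular ∧
      (signedPermMatrix Fin.revPerm d)⁻¹ * u = L * (signedPermMatrix Fin.revPerm d)⁻¹ := by
  refine ⟨_, isLowerUnitriangular_revPerm_conj hd hu, ?_⟩
  rw [Matrix.mul_assoc _ (signedPermMatrix _ d), mul_nonsing_inv _ (isUnit_det_signedPermMatrix hd),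
    Matrix.mul_one]

theorem ulMinor_wbar_inv_mul_theta {k : ℕ} {ι : Fin k → ℕ} {c : Fin k → ℂ}
    (hι : ∀ m, ι m < n) (hc : ∀ m, c m ≠ 0) (hred : (wordPerm n ι).numInversions = k)
    (hw0 : wordPerm n ι = Fin.revPerm) {j : ℕ} (hj : j ≤ n + 1) :
    ulMinor ((wbar n ι)⁻¹ * theta n ι c) j = 1 := by
  obtain ⟨nL, nR, hnL, hnR, hθ⟩ := exists_theta_eq_mul_wbar_mul hι hc hred
  obtain ⟨d, hd, hW⟩ := wbar_eq_signedPermMatrix (n := n) hι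
  rw [hw0] at hW
  have hconj : (wbar n ι)⁻¹ * theta n ι c = ((wbar n ι)⁻¹ * nL * wbar n ι) * nR := by
    rw [hθ]
    simp only [Matrix.mul_assoc]
  rw [hconj, hW, ulMinor_mul_of_isLowerUnitriangular (isLowerUnitriangular_revPerm_conj hd hnL),
    ulMinor_of_isUpperUnitriangular hnR hj]

end Bruhat

section Minors

variable {n : ℕ}

theorem mul_sbar_apply {j : ℕ} (hj : j < n) (M : Matrix (Fin (n + 1)) (Fin (n + 1)) ℂ)
    (k l : Fin (n + 1)) :
    (M * sbar n j) k l = if (l : ℕ) = j then M k ⟨j + 1, by omega⟩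
      else if (l : ℕ) = j + 1 then -M k ⟨j, by omega⟩ else M k l := by
  rw [sbar_eq_signedPermMatrix hj, mul_signedPermMatrix_apply, sperm_of_lt hj,
    Equiv.swap_apply_def, sbarSign]
  simp only [Fin.ext_iff]
  split_ifs <;> first | omega | simp

-- Right multiplication by `y_j(s)` adds `s` times column `j+1` to column `j`, and column `j+1`
-- of `M s̄_j` is minus column `j` of `M`.
theorem ulMinor_mul_sbar_mul_ymat {j : ℕ} (hj : j < n) (M : Matrix (Fin (n + 1)) (Fin (n + 1)) ℂ)
    (s : ℂ) :
    ulMinor (M * sbar n j * ymat n j s) (j + 1)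
      = ulMinor (M * sbar n j) (j + 1) - s * ulMinor M (j + 1) := by
  have h : j + 1 ≤ n + 1 := by omega
  set f := Fin.castLE h
  set B := (M * sbar n j).submatrix f f
  have hf : ∀ q : Fin (j + 1), ((f q : Fin (n + 1)) : ℕ) = q := fun _ => rfl
  have hblock : (M * sbar n j * ymat n j s).submatrix f f = B.updateCol (Fin.last j)
      ((fun q => B q (Fin.last j)) + (-s) • fun q => M (f q) ⟨j, by omega⟩) := by
    ext q r
    simp only [submatrix_apply, mul_ymat_apply hj, updateCol_apply, Pi.add_apply, Pi.smul_apply,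
      smul_eq_mul, B, mul_sbar_apply hj, Fin.ext_iff, hf, Fin.val_last]
    split_ifs <;> first | omega | ring1
  have hM : B.updateCol (Fin.last j) (fun q => M (f q) ⟨j, by omega⟩) = M.submatrix f f := by
    ext q r
    simp only [submatrix_apply, updateCol_apply, B, mul_sbar_apply hj, Fin.ext_iff, hf,
      Fin.val_last]
    split_ifs with hr hr'
    · exact congrArg (M (f q)) (Fin.ext (by rw [hf]; exact hr.symm))
    · omega
    · rfl
  simp only [ulMinor, dif_pos h]
  rw [hblock, det_updateCol_add, updateCol_eq_self, det_updateCol_smul, hM]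
  ring

theorem ulMinor_mul_xmat_mul_sbar (M : Matrix (Fin (n + 1)) (Fin (n + 1)) ℂ) (i j : Fin n)
    (b : ℂ) :
    ulMinor (M * xmat n i b * sbar n j) (j + 1)
      = ulMinor (M * sbar n j) (j + 1) + if i = j then b * ulMinor M (j + 1) else 0 := by
  split_ifs with hij
  · subst hij
    rw [Matrix.mul_assoc, xmat_mul_sbar i.isLt, ← Matrix.mul_assoc,
      ulMinor_mul_sbar_mul_ymat i.isLt]
    ring
  · have h0 : xmat n i b ⟨j, by omega⟩ ⟨j + 1, by omega⟩ = 0 := by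
      have hij : (i : ℕ) ≠ j := Fin.val_ne_of_ne hij
      rw [xmat_apply i.isLt, if_neg (by simp [Fin.ext_iff]), if_neg (by simp; omega), add_zero]
    obtain ⟨u, hu, hxs⟩ := exists_mul_sbar_eq_sbar_mul j.isLt (isUpperUnitriangular_xmat _ _) h0
    rw [Matrix.mul_assoc, hxs, ← Matrix.mul_assoc, ulMinor_mul_of_isUpperUnitriangular _ hu,
      add_zero]

end Minors

theorem half_potential_transformation_general {n N : ℕ} (ι : Fin N → ℕ) (hlt : ∀ m, ι m < n)
    (hlen : N = n * (n + 1) / 2)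
    (hw0 : (List.ofFn (fun m => sperm n (ι m))).prod = (Fin.revPerm : Equiv.Perm (Fin (n+1))))
    (c : Fin N → ℂ) (hc : ∀ m, c m ≠ 0) (i : Fin n) (α : ℂ) :
    let g := theta n ι c
    let εi : ℂ := g i.succ i.succ / g i.succ i.castSucc
    let φi : ℂ := (g i.castSucc i.castSucc / g i.succ i.succ) * εi
    let eg := xmat n (i : ℕ) ((α - 1) * φi) * g * xmat n (i : ℕ) ((α⁻¹ - 1) * εi)
    (∀ j : Fin n,
      ulMinor ((wbar n ι)⁻¹ * eg * sbar n (j : ℕ)) ((j : ℕ) + 1)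
          = ulMinor ((wbar n ι)⁻¹ * g * sbar n (j : ℕ)) ((j : ℕ) + 1)
            + (if i = j then (α⁻¹ - 1) * εi else 0) ∧
      ulMinor ((wbar n ι)⁻¹ * eg) ((j : ℕ) + 1) = ulMinor ((wbar n ι)⁻¹ * g) ((j : ℕ) + 1) ∧
      ulMinor ((wbar n ι)⁻¹ * g) ((j : ℕ) + 1) = 1) ∧
    (∑ j : Fin n, ulMinor ((wbar n ι)⁻¹ * eg * sbar n (j : ℕ)) ((j : ℕ) + 1))
      = (∑ j : Fin n, ulMinor ((wbar n ι)⁻¹ * g * sbar n (j : ℕ)) ((j : ℕ) + 1))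
        + (α⁻¹ - 1) * εi := by
  intro g εi φi eg
  have hred : (wordPerm n ι).numInversions = N := by
    rw [wordPerm, hw0, Equiv.Perm.numInversions_revPerm, hlen, Nat.add_sub_cancel, mul_comm]
  have hA : ∀ j ≤ n + 1, ulMinor ((wbar n ι)⁻¹ * g) j = 1 := fun j hj =>
    ulMinor_wbar_inv_mul_theta hlt hc hred hw0 hj
  obtain ⟨d, hd, hW⟩ := wbar_eq_signedPermMatrix hlt
  rw [show wordPerm n ι = Fin.revPerm from hw0] at hW
  obtain ⟨L, hL, hWx⟩ :=
    exists_inv_signedPermMatrix_revPerm_mul_eq hd (isUpperUnitriangular_xmat i ((α - 1) * φi))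
  rw [← hW] at hWx
  have heg : ∀ Z, (wbar n ι)⁻¹ * eg * Z
      = L * ((wbar n ι)⁻¹ * g * xmat n i ((α⁻¹ - 1) * εi) * Z) := by
    intro Z
    simp only [eg, ← Matrix.mul_assoc, hWx]
  have hshift : ∀ j : Fin n, ulMinor ((wbar n ι)⁻¹ * eg * sbar n j) (j + 1)
      = ulMinor ((wbar n ι)⁻¹ * g * sbar n j) (j + 1) + if i = j then (α⁻¹ - 1) * εi else 0 := by
    intro j
    rw [heg, ulMinor_mul_of_isLowerUnitriangular hL, ulMinor_mul_xmat_mul_sbar,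
      hA _ (by omega), mul_one]
  refine ⟨fun j => ⟨hshift j, ?_, hA _ (by omega)⟩, ?_⟩
  · rw [← Matrix.mul_one ((wbar n ι)⁻¹ * eg), heg, Matrix.mul_one,
      ulMinor_mul_of_isLowerUnitriangular hL,
      ulMinor_mul_of_isUpperUnitriangular _ (isUpperUnitriangular_xmat _ _)]
  · rw [Finset.sum_congr rfl fun j _ => hshift j, Finset.sum_add_distrib, Finset.sum_ite_eq]
    simp

/-- The geometric crystal operator `e_i^α` changes the minors
`Δ_{w₀Λ_j, s_jΛ_j}` by `δ_{ij}(α⁻¹−1)ε_i(g)`, fixes the principal minors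
`Δ_{w₀Λ_j, Λ_j}` (which equal `1`), and hence
`Φ⁺(e_i^α(g)) = Φ⁺(g) + (α⁻¹−1)ε_i(g)`. -/
theorem half_potential_transformation {n N : ℕ} (ι : Fin N → ℕ) (hlt : ∀ m, ι m < n)
    (hlen : N = n * (n + 1) / 2)
    (hw0 : (List.ofFn (fun m => sperm n (ι m))).prod = (Fin.revPerm : Equiv.Perm (Fin (n+1))))
    (c : Fin N → ℂ) (hc : ∀ m, c m ≠ 0) (i : Fin n) (α : ℂ) (hα : α ≠ 0)
    (hg : theta n ι c i.succ i.castSucc ≠ 0) :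
    let g := theta n ι c
    let εi : ℂ := g i.succ i.succ / g i.succ i.castSucc
    let φi : ℂ := (g i.castSucc i.castSucc / g i.succ i.succ) * εi
    let eg := xmat n (i : ℕ) ((α - 1) * φi) * g * xmat n (i : ℕ) ((α⁻¹ - 1) * εi)
    (∀ j : Fin n,
      ulMinor ((wbar n ι)⁻¹ * eg * sbar n (j : ℕ)) ((j : ℕ) + 1)
          = ulMinor ((wbar n ι)⁻¹ * g * sbar n (j : ℕ)) ((j : ℕ) + 1)
            + (if i = j then (α⁻¹ - 1) * εi else 0) ∧
      ulMinor ((wbar n ι)⁻¹ * eg) ((j : ℕ) + 1) = ulMinor ((wbar n ι)⁻¹ * g) ((j : ℕ) + 1) ∧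
      ulMinor ((wbar n ι)⁻¹ * g) ((j : ℕ) + 1) = 1) ∧
    (∑ j : Fin n, ulMinor ((wbar n ι)⁻¹ * eg * sbar n (j : ℕ)) ((j : ℕ) + 1))
      = (∑ j : Fin n, ulMinor ((wbar n ι)⁻¹ * g * sbar n (j : ℕ)) ((j : ℕ) + 1))
        + (α⁻¹ - 1) * εi :=
  half_potential_transformation_general ι hlt hlen hw0 c hc i α
end

section
/- Let ι = (i_1,…,i_k) be a reduced word for an element w of S_{n+1} and let c ∈ (ℂ^×)^k. Then the matrix Θ_ι(c) ∈ SL_{n+1}(ℂ) is lower triangular with nonzero diagonal entries, and for every i ∈ {1,…,n}: (a) Θ_ι(c)_{i,i} / Θ_ι(c)_{i+1,i+1} = ∏_{l=1}^k c_l^{−a_{i_l,i}}, and (b) Θ_ι(c)_{i+1,i} = Θ_ι(c)_{i+1,i+1} · ∑_{1≤m≤k, i_m=i} c_m^{-1} ∏_{l=m+1}^k c_l^{−a_{i_l,i}}, where (a_{pq}) is the Cartan matrix of type A_n. -/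
/-- The Cartan matrix of type `A_n` (on 0-based indices):
`a_{pp} = 2`, `a_{pq} = −1` if `|p−q| = 1`, and `0` otherwise. -/
def cartanA (p q : ℕ) : ℤ :=
  if p = q then 2 else if p = q + 1 ∨ q = p + 1 then -1 else 0

/-!
Each factor `y_j(t) α_j^∨(t⁻¹)` is lower triangular with diagonal `α_j^∨(t⁻¹)` and, for `j < n`,
a single subdiagonal entry `1` at `(j+1, j)`. For lower triangular matrices the diagonal is
multiplicative, and since `i+1` covers `i`,
`(MN)_{i+1,i} = M_{i+1,i} N_{i,i} + M_{i+1,i+1} N_{i+1,i}`. Hence `ρ = M_{i,i} / M_{i+1,i+1}` and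
`σ = M_{i+1,i} / M_{i+1,i+1}` compose like the affine group: `ρ(MN) = ρ(M) ρ(N)` and
`σ(MN) = σ(M) ρ(N) + σ(N)`. Unrolling this along the word gives (b), and (a) is
`ρ(α_j^∨(t⁻¹)) = t^{-a_{j,i}}`.
-/

open Finset OrderDual

namespace Matrix

variable {m R : Type*} [Fintype m]

theorem BlockTriangular.mul_apply_self {α : Type*} [LinearOrder α] [NonUnitalNonAssocSemiring R]
    {M N : Matrix m m R} {b : m → α} (hb : Function.Injective b)
    (hM : M.BlockTriangular b) (hN : N.BlockTriangular b) (i : m) :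
    (M * N) i i = M i i * N i i := by
  refine (Finset.sum_eq_single i (fun k _ hk => ?_) (by simp)).trans rfl
  rcases lt_or_gt_of_ne (hb.ne hk) with h | h
  · exact mul_eq_zero_of_left (hM h) _
  · exact mul_eq_zero_of_right _ (hN h)

theorem BlockTriangular.mul_apply_of_covBy [LinearOrder m] [NonUnitalNonAssocSemiring R]
    {M N : Matrix m m R} (hM : M.BlockTriangular toDual) (hN : N.BlockTriangular toDual)
    {i j : m} (hij : i ⋖ j) :
    (M * N) j i = M j i * N i i + M j j * N j i := by
  refine Finset.sum_eq_add i j hij.ne (fun k _ ⟨hki, hkj⟩ => ?_) (by simp) (by simp)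
  rcases lt_or_gt_of_ne hki with h | h
  · exact mul_eq_zero_of_right _ (hN (toDual_lt_toDual.mpr h))
  · exact mul_eq_zero_of_left (hM (toDual_lt_toDual.mpr ((hij.ge_of_gt h).lt_of_ne' hkj))) _

variable [DecidableEq m] {α : Type*} [LinearOrder α] {k : ℕ}

theorem BlockTriangular.prod_ofFn [Semiring R] {M : Fin k → Matrix m m R} {b : m → α}
    (hM : ∀ l, (M l).BlockTriangular b) : (List.ofFn M).prod.BlockTriangular b :=
  list_prod_mem (S := blockTriangularSubsemiring R b) (by simpa [List.mem_ofFn] using hM)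

theorem BlockTriangular.prod_ofFn_apply_self [CommSemiring R] {M : Fin k → Matrix m m R}
    {b : m → α} (hb : Function.Injective b) (hM : ∀ l, (M l).BlockTriangular b) (i : m) :
    (List.ofFn M).prod i i = ∏ l, M l i i := by
  induction k with
  | zero => simp
  | succ k ih =>
    rw [List.ofFn_succ, List.prod_cons, mul_apply_self hb (hM 0) (prod_ofFn fun l => hM l.succ),
      ih fun l => hM l.succ, Fin.prod_univ_succ]

theorem BlockTriangular.prod_ofFn_apply_of_covBy [LinearOrder m] {K : Type*} [Field K]
    {M : Fin k → Matrix m m K} (hM : ∀ l, (M l).BlockTriangular toDual) {i j : m} (hij : i ⋖ j)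
    (hjj : ∀ l, M l j j ≠ 0) :
    (List.ofFn M).prod j i =
      (List.ofFn M).prod j j * ∑ l, M l j i / M l j j * ∏ l' ∈ Ioi l, M l' i i / M l' j j := by
  induction k with
  | zero => simp [one_apply_ne hij.ne']
  | succ k ih =>
    have hM' : ∀ l : Fin k, (M l.succ).BlockTriangular toDual := fun l => hM l.succ
    rw [List.ofFn_succ, List.prod_cons, mul_apply_of_covBy (hM 0) (prod_ofFn hM') hij,
      mul_apply_self toDual.injective (hM 0) (prod_ofFn hM'), ih hM' fun l => hjj l.succ,
      Fin.sum_univ_succ, Fin.Ioi_zero_eq_map, prod_map]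
    simp only [Fin.Ioi_succ, prod_map, Fin.coe_succEmb, prod_div_distrib,
      prod_ofFn_apply_self toDual.injective hM']
    have h₀ := hjj 0
    have hQ : ∏ l : Fin k, M l.succ j j ≠ 0 := prod_ne_zero_iff.mpr fun l _ => hjj l.succ
    field_simp

end Matrix

theorem Fin.castSucc_covBy_succ {n : ℕ} (i : Fin n) : i.castSucc ⋖ i.succ :=
  ⟨Fin.castSucc_lt_succ, fun k h₁ h₂ => by
    simp only [Fin.lt_def, Fin.val_castSucc, Fin.val_succ] at h₁ h₂
    omega⟩

open Matrix

section Theta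

variable {n : ℕ}

theorem blockTriangular_ymat (j : ℕ) (t : ℂ) : (ymat n j t).BlockTriangular toDual := by
  unfold ymat
  split_ifs
  · exact blockTriangular_one.add (blockTriangular_single' (by simp [Fin.le_def]) _)
  · exact blockTriangular_one

theorem ymat_apply_self (j : ℕ) (t : ℂ) (p : Fin (n + 1)) : ymat n j t p p = 1 := by
  unfold ymat
  split_ifs
  · simp [single_apply, Fin.ext_iff]
    omega
  · simp

theorem ymat_apply_succ_castSucc (j : ℕ) (t : ℂ) (i : Fin n) :
    ymat n j t i.succ i.castSucc = if j = i then t else 0 := by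
  unfold ymat
  split_ifs <;> simp_all [single_apply, Fin.ext_iff, one_apply_ne]

theorem avmat_apply_self_ne_zero (j : ℕ) {s : ℂ} (hs : s ≠ 0) (p : Fin (n + 1)) :
    avmat n j s p p ≠ 0 := by
  rw [avmat, diagonal_apply_eq]
  split_ifs <;> simp [hs]

theorem avmat_inv_castSucc_div_succ (j : ℕ) (t : ℂ) (i : Fin n) :
    avmat n j t⁻¹ i.castSucc i.castSucc / avmat n j t⁻¹ i.succ i.succ = t ^ (-cartanA j i) := by
  simp only [avmat, diagonal_apply_eq, Fin.val_castSucc, Fin.val_succ, cartanA]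
  split_ifs <;> first | omega | simp [div_eq_mul_inv, sq]

theorem ymat_mul_avmat_apply (j : ℕ) (t s : ℂ) (p q : Fin (n + 1)) :
    (ymat n j t * avmat n j s) p q = ymat n j t p q * avmat n j s q q := by
  rw [avmat, mul_diagonal, diagonal_apply_eq]

theorem ymat_mul_avmat_apply_self (j : ℕ) (t s : ℂ) (p : Fin (n + 1)) :
    (ymat n j t * avmat n j s) p p = avmat n j s p p := by
  rw [ymat_mul_avmat_apply, ymat_apply_self, one_mul]

theorem blockTriangular_ymat_mul_avmat (j : ℕ) (t s : ℂ) :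
    (ymat n j t * avmat n j s).BlockTriangular toDual :=
  (blockTriangular_ymat j t).mul (blockTriangular_diagonal _)

theorem ymat_mul_avmat_inv_succ_castSucc_div (j : ℕ) (t : ℂ) (i : Fin n) :
    (ymat n j t * avmat n j t⁻¹) i.succ i.castSucc / (ymat n j t * avmat n j t⁻¹) i.succ i.succ
      = if j = i then t⁻¹ else 0 := by
  rw [ymat_mul_avmat_apply, ymat_mul_avmat_apply_self, ymat_apply_succ_castSucc, mul_div_assoc,
    avmat_inv_castSucc_div_succ]
  split_ifs with h
  · rw [h, cartanA, if_pos rfl, _root_.zpow_neg, zpow_two]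
    field_simp
  · rw [zero_mul]

end Theta

theorem theta_entries_general {n k : ℕ} (ι : Fin k → ℕ)
    (c : Fin k → ℂ) (hc : ∀ m, c m ≠ 0) :
    (∀ p q : Fin (n + 1), p < q → theta n ι c p q = 0) ∧
    (∀ p : Fin (n + 1), theta n ι c p p ≠ 0) ∧
    (∀ i : Fin n,
      theta n ι c i.castSucc i.castSucc / theta n ι c i.succ i.succ
        = ∏ l : Fin k, (c l) ^ (-(cartanA (ι l) (i : ℕ)))) ∧
    (∀ i : Fin n,
      theta n ι c i.succ i.castSucc
        = theta n ι c i.succ i.succ *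
            ∑ m ∈ Finset.univ.filter (fun m : Fin k => ι m = (i : ℕ)),
              (c m)⁻¹ * ∏ l ∈ Finset.univ.filter (fun l : Fin k => m < l),
                (c l) ^ (-(cartanA (ι l) (i : ℕ)))) := by
  have hF l := blockTriangular_ymat_mul_avmat (n := n) (ι l) (c l) (c l)⁻¹
  have hdiag p : theta n ι c p p = ∏ l, avmat n (ι l) (c l)⁻¹ p p := by
    simp only [theta, BlockTriangular.prod_ofFn_apply_self toDual.injective hF,
      ymat_mul_avmat_apply_self]
  have hdiag_ne l p : avmat n (ι l) (c l)⁻¹ p p ≠ 0 :=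
    avmat_apply_self_ne_zero _ (inv_ne_zero (hc l)) p
  refine ⟨fun p q hpq => BlockTriangular.prod_ofFn hF (toDual_lt_toDual.mpr hpq),
    fun p => hdiag p ▸ prod_ne_zero_iff.mpr fun l _ => hdiag_ne l p, fun i => ?_, fun i => ?_⟩
  · rw [hdiag, hdiag, ← prod_div_distrib]
    exact prod_congr rfl fun l _ => avmat_inv_castSucc_div_succ _ _ i
  · rw [theta, BlockTriangular.prod_ofFn_apply_of_covBy hF (Fin.castSucc_covBy_succ i)
      fun l => ymat_mul_avmat_apply_self .. ▸ hdiag_ne l _, ← theta, sum_filter]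
    simp only [ymat_mul_avmat_inv_succ_castSucc_div]
    simp only [ymat_mul_avmat_apply_self, avmat_inv_castSucc_div_succ, filter_lt_eq_Ioi,
      ite_mul, zero_mul]

/-- `Θ_ι(c)` is lower triangular with nonzero diagonal, its
consecutive diagonal ratios are `∏_l c_l^{−a_{i_l,i}}`, and its subdiagonal
entries are given by
`Θ_{i+1,i} = Θ_{i+1,i+1} ∑_{m : i_m = i} c_m⁻¹ ∏_{l>m} c_l^{−a_{i_l,i}}`. -/
theorem theta_entries {n k : ℕ} (ι : Fin k → ℕ) (hlt : ∀ m, ι m < n)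
    (hred : ∀ l' : List ℕ, (∀ x ∈ l', x < n) →
      (l'.map (sperm n)).prod = (List.ofFn (fun m => sperm n (ι m))).prod →
      k ≤ l'.length)
    (c : Fin k → ℂ) (hc : ∀ m, c m ≠ 0) :
    (∀ p q : Fin (n + 1), p < q → theta n ι c p q = 0) ∧
    (∀ p : Fin (n + 1), theta n ι c p p ≠ 0) ∧
    (∀ i : Fin n,
      theta n ι c i.castSucc i.castSucc / theta n ι c i.succ i.succ
        = ∏ l : Fin k, (c l) ^ (-(cartanA (ι l) (i : ℕ)))) ∧
    (∀ i : Fin n,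
      theta n ι c i.succ i.castSucc
        = theta n ι c i.succ i.succ *
            ∑ m ∈ Finset.univ.filter (fun m : Fin k => ι m = (i : ℕ)),
              (c m)⁻¹ * ∏ l ∈ Finset.univ.filter (fun l : Fin k => m < l),
                (c l) ^ (-(cartanA (ι l) (i : ℕ)))) :=
  theta_entries_general ι c hc
end

section
/- Let ι = (i_1,…,i_N) be a word in {1,…,n}, let i be an index occurring in ι, and let x ∈ ℤ^N. For each m with i_m = i set X_m(x) = x_m + ∑_{l=1}^{m−1} a_{i_l,i} x_l, and let m_e(x) (resp. m_f(x)) be the largest (resp. smallest) m with i_m = i at which X_m(x) attains its minimum over {m : i_m = i}. For n′ ∈ ℤ define x′ = (x′_1,…,x′_N) by x′_j = x_j + min( min_{1≤m<j, i_m=i}(n′ + X_m(x)), min_{j≤m≤N, i_m=i} X_m(x) ) − min( min_{1≤m≤j, i_m=i}(n′ + X_m(x)), min_{j<m≤N, i_m=i} X_m(x) ), where a minimum over the empty set is +∞. Then: for n′ = 1, x′ equals x with its m_e(x)-th coordinate decreased by 1; and for n′ = −1, x′ equals x with its m_f(x)-th coordinate increased by 1. -/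
/-- `X_m(x) = x_m + ∑_{l<m} a_{i_l,i} x_l`. -/
def Xfun {n N : ℕ} (a : Fin n → Fin n → ℤ) (ι : Fin N → Fin n) (i : Fin n)
    (x : Fin N → ℤ) (m : Fin N) : ℤ :=
  x m + ∑ l ∈ Finset.univ.filter (fun l => l < m), a (ι l) i * x l


private lemma inf'_eq_of {β : Type*} {s : Finset β} (h : s.Nonempty) (f : β → ℤ) (v : ℤ)
    (hw : ∃ m ∈ s, f m = v) (hl : ∀ m ∈ s, v ≤ f m) : s.inf' h f = v := by
  obtain ⟨m, hm, hfm⟩ := hw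
  exact le_antisymm (hfm ▸ Finset.inf'_le f hm) (Finset.le_inf' h f hl)

/-- For `n′ = 1` (resp. `n′ = −1`), the tropical formula
`x′_j = x_j + min(min_{m<j, i_m=i}(n′+X_m), min_{j≤m, i_m=i} X_m)
            − min(min_{m≤j, i_m=i}(n′+X_m), min_{j<m, i_m=i} X_m)`
equals `x` with its `m_e(x)`-th coordinate decreased by 1 (resp. its
`m_f(x)`-th coordinate increased by 1), where `m_e(x)` (resp. `m_f(x)`) is the
largest (resp. smallest) index `m` with `i_m = i` at which `X_m(x)` attains its
minimum over `{m : i_m = i}`.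

The two minima in the formula are encoded as single minima over the nonempty set
`S = {m : i_m = i}` of the functions `m ↦ if m < j then n′ + X_m else X_m` and
`m ↦ if m ≤ j then n′ + X_m else X_m` (a minimum over an empty subset is `+∞`,
so it never contributes). -/
theorem tropical_formula_is_kashiwara {n N : ℕ} (C : SimpleCartanMatrix n)
    (ι : Fin N → Fin n) (i : Fin n)
    (hocc : (Finset.univ.filter (fun m => ι m = i)).Nonempty)
    (x : Fin N → ℤ) (me mf : Fin N)
    (hme : ι me = i ∧
      Xfun C.a ι i x me =
        (Finset.univ.filter (fun m => ι m = i)).inf' hocc (Xfun C.a ι i x) ∧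
      ∀ m ∈ Finset.univ.filter (fun m => ι m = i),
        Xfun C.a ι i x m =
            (Finset.univ.filter (fun m => ι m = i)).inf' hocc (Xfun C.a ι i x) →
          m ≤ me)
    (hmf : ι mf = i ∧
      Xfun C.a ι i x mf =
        (Finset.univ.filter (fun m => ι m = i)).inf' hocc (Xfun C.a ι i x) ∧
      ∀ m ∈ Finset.univ.filter (fun m => ι m = i),
        Xfun C.a ι i x m =
            (Finset.univ.filter (fun m => ι m = i)).inf' hocc (Xfun C.a ι i x) →
          mf ≤ m) :
    (∀ j : Fin N,
      x j
        + (Finset.univ.filter (fun m => ι m = i)).inf' hocc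
            (fun m => if m < j then 1 + Xfun C.a ι i x m else Xfun C.a ι i x m)
        - (Finset.univ.filter (fun m => ι m = i)).inf' hocc
            (fun m => if m ≤ j then 1 + Xfun C.a ι i x m else Xfun C.a ι i x m)
      = Function.update x me (x me - 1) j) ∧
    (∀ j : Fin N,
      x j
        + (Finset.univ.filter (fun m => ι m = i)).inf' hocc
            (fun m => if m < j then (-1) + Xfun C.a ι i x m else Xfun C.a ι i x m)
        - (Finset.univ.filter (fun m => ι m = i)).inf' hocc
            (fun m => if m ≤ j then (-1) + Xfun C.a ι i x m else Xfun C.a ι i x m)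
      = Function.update x mf (x mf + 1) j) := by
  classical
  set S := Finset.univ.filter (fun m => ι m = i) with hS
  set X := Xfun C.a ι i x with hX
  set M := S.inf' hocc X with hM
  obtain ⟨hmei, hmeX, hmemax⟩ := hme
  obtain ⟨hmfi, hmfX, hmfmin⟩ := hmf
  have hmeS : me ∈ S := by simp [hS, hmei]
  have hmfS : mf ∈ S := by simp [hS, hmfi]
  have hle : ∀ m ∈ S, M ≤ X m := fun m hm => Finset.inf'_le X hm
  have hgt : ∀ m ∈ S, me < m → M + 1 ≤ X m := by
    intro m hm hlt
    have h1 := hle m hm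
    have h2 : X m ≠ M := fun h => absurd (hmemax m hm h) (not_le.mpr hlt)
    omega
  have hlt' : ∀ m ∈ S, m < mf → M + 1 ≤ X m := by
    intro m hm hlt
    have h1 := hle m hm
    have h2 : X m ≠ M := fun h => absurd (hmfmin m hm h) (not_le.mpr hlt)
    omega
  constructor
  · intro j
    have hf : S.inf' hocc (fun m => if m < j then 1 + X m else X m)
        = if me < j then M + 1 else M := by
      by_cases hj : me < j
      · rw [if_pos hj]
        refine inf'_eq_of hocc _ _ ⟨me, hmeS, by simp [hj, ← hmeX]; ring⟩ ?_
        intro m hm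
        by_cases h : m < j
        · have := hle m hm; simp [h]; omega
        · have : me < m := lt_of_lt_of_le hj (not_lt.mp h)
          have := hgt m hm this; simp [h]; omega
      · rw [if_neg hj]
        refine inf'_eq_of hocc _ _ ⟨me, hmeS, by simp [hj, ← hmeX]⟩ ?_
        intro m hm
        have := hle m hm
        by_cases h : m < j <;> simp [h] <;> omega
    have hg : S.inf' hocc (fun m => if m ≤ j then 1 + X m else X m)
        = if me ≤ j then M + 1 else M := by
      by_cases hj : me ≤ j
      · rw [if_pos hj]
        refine inf'_eq_of hocc _ _ ⟨me, hmeS, by simp [hj, ← hmeX]; ring⟩ ?_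
        intro m hm
        by_cases h : m ≤ j
        · have := hle m hm; simp [h]; omega
        · have : me < m := lt_of_le_of_lt hj (not_le.mp h)
          have := hgt m hm this; simp [h]; omega
      · rw [if_neg hj]
        refine inf'_eq_of hocc _ _ ⟨me, hmeS, by simp [hj, ← hmeX]⟩ ?_
        intro m hm
        have := hle m hm
        by_cases h : m ≤ j <;> simp [h] <;> omega
    rw [hf, hg]
    rcases lt_trichotomy j me with h | h | h
    · rw [Function.update_of_ne (ne_of_lt h), if_neg (not_lt.mpr h.le), if_neg (not_le.mpr h)]
      ring
    · subst h
      rw [Function.update_self, if_neg (lt_irrefl _), if_pos le_rfl]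
      ring
    · rw [Function.update_of_ne (ne_of_gt h), if_pos h, if_pos h.le]
      ring
  · intro j
    have hf : S.inf' hocc (fun m => if m < j then (-1) + X m else X m)
        = if mf < j then M - 1 else M := by
      by_cases hj : mf < j
      · rw [if_pos hj]
        refine inf'_eq_of hocc _ _ ⟨mf, hmfS, by simp [hj, ← hmfX]; ring⟩ ?_
        intro m hm
        have := hle m hm
        by_cases h : m < j <;> simp [h] <;> omega
      · rw [if_neg hj]
        refine inf'_eq_of hocc _ _ ⟨mf, hmfS, by simp [hj, ← hmfX]⟩ ?_
        intro m hm
        by_cases h : m < j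
        · have : m < mf := lt_of_lt_of_le h (not_lt.mp hj)
          have := hlt' m hm this; simp [h]; omega
        · have := hle m hm; simp [h]; omega
    have hg : S.inf' hocc (fun m => if m ≤ j then (-1) + X m else X m)
        = if mf ≤ j then M - 1 else M := by
      by_cases hj : mf ≤ j
      · rw [if_pos hj]
        refine inf'_eq_of hocc _ _ ⟨mf, hmfS, by simp [hj, ← hmfX]; ring⟩ ?_
        intro m hm
        have := hle m hm
        by_cases h : m ≤ j <;> simp [h] <;> omega
      · rw [if_neg hj]
        refine inf'_eq_of hocc _ _ ⟨mf, hmfS, by simp [hj, ← hmfX]⟩ ?_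
        intro m hm
        by_cases h : m ≤ j
        · have : m < mf := lt_of_le_of_lt h (not_le.mp hj)
          have := hlt' m hm this; simp [h]; omega
        · have := hle m hm; simp [h]; omega
    rw [hf, hg]
    rcases lt_trichotomy j mf with h | h | h
    · rw [Function.update_of_ne (ne_of_lt h), if_neg (not_lt.mpr h.le), if_neg (not_le.mpr h)]
      ring
    · subst h
      rw [Function.update_self, if_neg (lt_irrefl _), if_pos le_rfl]
      ring
    · rw [Function.update_of_ne (ne_of_gt h), if_pos h, if_pos h.le]
      ring
end
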